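/- arXiv:math/0604600 — 6 statements merged into one kernel-verified Lean document; each statement's English description precedes it below -/
import Mathlib

section
/- Let 0 = τ₀ < τ₁ < … < τ_M = 1 be the merged partition generated by the uniform grids t_{ℓ,i} = ℓ/n_i, and for j ∈ ℕ_{≥1}^d let Γ_j(t) = ∏_{ν=1}^M 1/(1 + μ_j·(t∧τ_ν − t∧τ_{ν−1})). Then for every j ∈ ℕ_{≥1}^d and all real numbers 0 ≤ s ≤ t ≤ 1 one has |1 − Γ_j(t)/Γ_j(s)| ≤ min(1, μ_j·(t−s)). -/
open Real MeasureTheory Finset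

/-- The Laplace eigenvalue `μ_i = π² |i|₂²` for a multi-index `i ∈ ℕ_{≥1}^d`. -/
noncomputable def eig {d : ℕ} (i : Fin d → ℕ+) : ℝ :=
  π ^ 2 * ∑ ℓ : Fin d, ((i ℓ : ℕ) : ℝ) ^ 2

/-- `τ : ℕ → ℝ`, via `τ 0 = 0 < τ 1 < … < τ M = 1`, enumerates the merged partition
generated by the uniform grids `t_{ℓ,i} = ℓ / n_i`, `ℓ = 0, …, n_i`, `i ∈ I`. -/
def IsMergedPartition {d : ℕ} (I : Finset (Fin d → ℕ+)) (n : (Fin d → ℕ+) → ℕ+)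
    (M : ℕ) (τ : ℕ → ℝ) : Prop :=
  τ 0 = 0 ∧ τ M = 1 ∧ (∀ ν < M, τ ν < τ (ν + 1)) ∧
    τ '' (Set.Iic M) =
      {x : ℝ | ∃ i ∈ I, ∃ ℓ : ℕ, ℓ ≤ (n i : ℕ) ∧ x = (ℓ : ℝ) / ((n i : ℕ) : ℝ)}

/-- `Γ_j(t) = ∏_{ν=1}^M 1 / (1 + μ_j (t ∧ τ_ν − t ∧ τ_{ν−1}))`. -/
noncomputable def Gam (μj : ℝ) (M : ℕ) (τ : ℕ → ℝ) (t : ℝ) : ℝ :=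
  ∏ ν ∈ Finset.Icc 1 M, 1 / (1 + μj * (min t (τ ν) - min t (τ (ν - 1))))

lemma min_sub_min_mono' {a b s t : ℝ} (hab : a ≤ b) (hst : s ≤ t) :
    min s b - min s a ≤ min t b - min t a := by
  simp only [min_def]
  split_ifs <;> linarith

lemma tele_icc' (g : ℕ → ℝ) (M : ℕ) :
    ∑ ν ∈ Finset.Icc 1 M, (g ν - g (ν - 1)) = g M - g 0 := by
  induction M with
  | zero => simp
  | succ m ih =>
    rw [Finset.sum_Icc_succ_top (by omega), ih]
    simp

lemma one_sub_prod_le_sum' (S : Finset ℕ) (f : ℕ → ℝ)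
    (h0 : ∀ i ∈ S, 0 ≤ f i) (h1 : ∀ i ∈ S, f i ≤ 1) :
    1 - ∏ i ∈ S, f i ≤ ∑ i ∈ S, (1 - f i) := by
  induction S using Finset.induction_on with
  | empty => simp
  | @insert a S ha ih =>
    rw [Finset.prod_insert ha, Finset.sum_insert ha]
    have h1a := h1 a (mem_insert_self a S)
    have hP1 : ∏ i ∈ S, f i ≤ 1 :=
      Finset.prod_le_one (fun i hi => h0 i (mem_insert_of_mem hi))
        (fun i hi => h1 i (mem_insert_of_mem hi))
    have hih := ih (fun i hi => h0 i (mem_insert_of_mem hi))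
      (fun i hi => h1 i (mem_insert_of_mem hi))
    nlinarith [mul_nonneg (sub_nonneg.2 h1a) (sub_nonneg.2 hP1)]

theorem gam_ratio_bound
    (d : ℕ) (hd : 1 ≤ d)
    (I : Finset (Fin d → ℕ+)) (hI : I.Nonempty)
    (n : (Fin d → ℕ+) → ℕ+)
    (M : ℕ) (τ : ℕ → ℝ)
    (hτ : IsMergedPartition I n M τ)
    (j : Fin d → ℕ+) (s t : ℝ)
    (hs : 0 ≤ s) (hst : s ≤ t) (ht : t ≤ 1) :
    |1 - Gam (eig j) M τ t / Gam (eig j) M τ s| ≤ min 1 (eig j * (t - s)) := by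
  obtain ⟨hτ0, hτM, hmono, -⟩ := hτ
  set μ := eig j with hμdef
  have hμ : 0 < μ := by
    haveI : Nonempty (Fin d) := ⟨⟨0, hd⟩⟩
    have hsum : (0:ℝ) < ∑ ℓ : Fin d, ((j ℓ : ℕ) : ℝ) ^ 2 := by
      apply Finset.sum_pos
      · intro ℓ _
        have : (0:ℝ) < ((j ℓ : ℕ) : ℝ) := by exact_mod_cast (j ℓ).pos
        positivity
      · exact Finset.univ_nonempty
    have hπ := Real.pi_pos
    rw [hμdef, eig]
    positivity
  -- abbreviations
  set a : ℝ → ℕ → ℝ := fun u ν => min u (τ ν) - min u (τ (ν - 1)) with ha_def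
  have hcons : ∀ ν ∈ Finset.Icc 1 M, τ (ν - 1) ≤ τ ν := by
    intro ν hν
    obtain ⟨h1, hM⟩ := Finset.mem_Icc.mp hν
    have h := hmono (ν - 1) (by omega)
    rw [Nat.sub_add_cancel h1] at h
    exact h.le
  have ha_nonneg : ∀ (u : ℝ), ∀ ν ∈ Finset.Icc 1 M, 0 ≤ a u ν := by
    intro u ν hν
    exact sub_nonneg.2 (min_le_min le_rfl (hcons ν hν))
  have ha_mono : ∀ ν ∈ Finset.Icc 1 M, a s ν ≤ a t ν := by
    intro ν hν
    exact min_sub_min_mono' (hcons ν hν) hst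
  have hD : ∀ (u : ℝ), ∀ ν ∈ Finset.Icc 1 M, 1 ≤ 1 + μ * a u ν := by
    intro u ν hν
    nlinarith [ha_nonneg u ν hν]
  have tele : ∀ u : ℝ, 0 ≤ u → u ≤ 1 → ∑ ν ∈ Finset.Icc 1 M, a u ν = u := by
    intro u hu0 hu1
    have := tele_icc' (fun k => min u (τ k)) M
    simp only [ha_def]
    rw [this, hτ0, hτM, min_eq_left hu1, min_eq_right hu0]
    ring
  set A := ∏ ν ∈ Finset.Icc 1 M, (1 + μ * a s ν) with hA_def
  set B := ∏ ν ∈ Finset.Icc 1 M, (1 + μ * a t ν) with hB_def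
  have hA1 : (1:ℝ) ≤ A := by
    calc (1:ℝ) = ∏ _ν ∈ Finset.Icc 1 M, (1:ℝ) := by simp
    _ ≤ A := Finset.prod_le_prod (fun _ _ => zero_le_one) (hD s)
  have hB1 : (1:ℝ) ≤ B := by
    calc (1:ℝ) = ∏ _ν ∈ Finset.Icc 1 M, (1:ℝ) := by simp
    _ ≤ B := Finset.prod_le_prod (fun _ _ => zero_le_one) (hD t)
  have hAB : A ≤ B := by
    apply Finset.prod_le_prod
    · intro ν hν; linarith [hD s ν hν]
    · intro ν hν; nlinarith [ha_mono ν hν]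
  have hA0 : (0:ℝ) < A := lt_of_lt_of_le one_pos hA1
  have hB0 : (0:ℝ) < B := lt_of_lt_of_le one_pos hB1
  have hGam : Gam μ M τ t / Gam μ M τ s = A / B := by
    rw [Gam, Gam]
    simp only [one_div, Finset.prod_inv_distrib]
    rw [inv_div_inv]
  have hratio : Gam μ M τ t / Gam μ M τ s = ∏ ν ∈ Finset.Icc 1 M,
      ((1 + μ * a s ν) / (1 + μ * a t ν)) := by
    rw [hGam, Finset.prod_div_distrib]
  -- each factor in [0,1]
  have hf0 : ∀ ν ∈ Finset.Icc 1 M, 0 ≤ (1 + μ * a s ν) / (1 + μ * a t ν) := by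
    intro ν hν
    have := hD s ν hν; have := hD t ν hν
    positivity
  have hf1 : ∀ ν ∈ Finset.Icc 1 M, (1 + μ * a s ν) / (1 + μ * a t ν) ≤ 1 := by
    intro ν hν
    rw [div_le_one (by linarith [hD t ν hν])]
    nlinarith [ha_mono ν hν]
  have hkey : 1 - Gam μ M τ t / Gam μ M τ s ≤ μ * (t - s) := by
    rw [hratio]
    calc 1 - ∏ ν ∈ Finset.Icc 1 M, ((1 + μ * a s ν) / (1 + μ * a t ν))
        ≤ ∑ ν ∈ Finset.Icc 1 M, (1 - (1 + μ * a s ν) / (1 + μ * a t ν)) :=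
          one_sub_prod_le_sum' _ _ hf0 hf1
      _ ≤ ∑ ν ∈ Finset.Icc 1 M, μ * (a t ν - a s ν) := by
          apply Finset.sum_le_sum
          intro ν hν
          have hDt := hD t ν hν
          have ham := ha_mono ν hν
          rw [sub_div' (ne_of_gt (by linarith : (0:ℝ) < 1 + μ * a t ν))]
          rw [div_le_iff₀ (by linarith)]
          nlinarith [mul_nonneg (mul_nonneg hμ.le (sub_nonneg.2 ham))
            (mul_nonneg hμ.le (ha_nonneg t ν hν))]
      _ = μ * (t - s) := by
          rw [← Finset.mul_sum, Finset.sum_sub_distrib,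
            tele t (hs.trans hst) ht, tele s hs (hst.trans ht)]
  have hle1 : Gam μ M τ t / Gam μ M τ s ≤ 1 := by
    rw [hGam]; exact div_le_one_of_le₀ hAB hB0.le
  have hpos : 0 < Gam μ M τ t / Gam μ M τ s := by
    rw [hGam]; positivity
  rw [abs_of_nonneg (by linarith)]
  apply le_min
  · linarith
  · exact hkey
end

section
/- Let 0 = τ₀ < τ₁ < … < τ_M = 1 be the merged partition generated by the uniform grids t_{ℓ,i} = ℓ/n_i, and for j ∈ ℕ_{≥1}^d let Γ_j(t) = ∏_{ν=1}^M 1/(1 + μ_j·(t∧τ_ν − t∧τ_{ν−1})). Then for every i ∈ I, every j ∈ ℕ_{≥1}^d, and every ℓ ∈ {0,…,n_i−1} one has ∫_{t_{ℓ,i}}^1 Γ_j(t)²/Γ_j(t_{ℓ,i})² dt ≤ 2/μ_j. -/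
open Real MeasureTheory Finset

lemma one_add_sum_le_prod' (S : Finset ℕ) (g : ℕ → ℝ) (hg : ∀ ν ∈ S, 0 ≤ g ν) :
    1 + ∑ ν ∈ S, g ν ≤ ∏ ν ∈ S, (1 + g ν) := by
  classical
  induction S using Finset.induction with
  | empty => simp
  | @insert a S hx ih =>
    rw [Finset.sum_insert hx, Finset.prod_insert hx]
    have ha : 0 ≤ g a := hg a (Finset.mem_insert_self a S)
    have hS : ∀ ν ∈ S, 0 ≤ g ν := fun ν hν => hg ν (Finset.mem_insert_of_mem hν)
    have hsum : 0 ≤ ∑ ν ∈ S, g ν := Finset.sum_nonneg hS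
    have h1 := ih hS
    nlinarith [mul_nonneg ha hsum]

lemma telescope_Ioc (f : ℕ → ℝ) (k M : ℕ) (hkM : k ≤ M) :
    ∑ ν ∈ Finset.Ioc k M, (f ν - f (ν - 1)) = f M - f k := by
  induction M, hkM using Nat.le_induction with
  | base => simp
  | succ m hm ih =>
    rw [Finset.sum_Ioc_succ_top hm, ih]
    simp

theorem gam_sq_integral_bound
    (d : ℕ) (hd : 1 ≤ d)
    (I : Finset (Fin d → ℕ+)) (hI : I.Nonempty)
    (n : (Fin d → ℕ+) → ℕ+)
    (M : ℕ) (τ : ℕ → ℝ)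
    (hτ : IsMergedPartition I n M τ)
    (i : Fin d → ℕ+) (hi : i ∈ I) (j : Fin d → ℕ+)
    (ℓ : ℕ) (hℓ : ℓ < (n i : ℕ)) :
    ∫ t in ((ℓ : ℝ) / ((n i : ℕ) : ℝ))..(1 : ℝ),
        (Gam (eig j) M τ t) ^ 2 / (Gam (eig j) M τ ((ℓ : ℝ) / ((n i : ℕ) : ℝ))) ^ 2
      ≤ 2 / eig j := by
  obtain ⟨hτ0, hτM, hinc, himg⟩ := hτ
  set μ := eig j with hμdef
  have hμ : 0 < μ := by
    have hsum : (0:ℝ) < ∑ x : Fin d, ((j x : ℕ) : ℝ) ^ 2 := by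
      apply Finset.sum_pos
      · intro x _
        have : 0 < ((j x : ℕ) : ℝ) := by exact_mod_cast (j x).pos
        positivity
      · have : Nonempty (Fin d) := Fin.pos_iff_nonempty.mp (by omega)
        exact Finset.univ_nonempty
    have hπ : (0:ℝ) < π ^ 2 := by positivity
    exact mul_pos hπ hsum
  set s : ℝ := (ℓ : ℝ) / ((n i : ℕ) : ℝ) with hsdef
  have hn : (0:ℝ) < ((n i : ℕ) : ℝ) := by exact_mod_cast (n i).pos
  have hs0 : 0 ≤ s := by positivity
  have hs1 : s ≤ 1 := by
    rw [hsdef, div_le_one hn]; exact_mod_cast hℓ.le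
  -- find k with τ k = s
  obtain ⟨k, hkM, hks⟩ : ∃ k ≤ M, τ k = s := by
    have : s ∈ τ '' (Set.Iic M) := by
      rw [himg]; exact ⟨i, hi, ℓ, hℓ.le, rfl⟩
    obtain ⟨k, hk, hks⟩ := this
    exact ⟨k, hk, hks⟩
  -- monotonicity of τ on Iic M
  have hmono : ∀ a b : ℕ, a ≤ b → b ≤ M → τ a ≤ τ b := by
    intro a b hab hbM
    induction b, hab using Nat.le_induction with
    | base => exact le_rfl
    | succ m hm ih => exact (ih (by omega)).trans (hinc m (by omega)).le
  -- nonnegativity of increments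
  have hδ : ∀ ν ∈ Finset.Icc 1 M, ∀ t : ℝ,
      0 ≤ min t (τ ν) - min t (τ (ν - 1)) := by
    intro ν hν t
    rw [Finset.mem_Icc] at hν
    have hττ : τ (ν - 1) ≤ τ ν := by
      have := hmono (ν - 1) ν (by omega) hν.2
      exact this
    exact sub_nonneg.mpr (min_le_min le_rfl hττ)
  have hfac : ∀ ν ∈ Finset.Icc 1 M, ∀ t : ℝ,
      (1:ℝ) ≤ 1 + μ * (min t (τ ν) - min t (τ (ν - 1))) := by
    intro ν hν t
    nlinarith [hδ ν hν t, hμ]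
  have hGpos : ∀ t : ℝ, 0 < Gam μ M τ t := by
    intro t
    apply Finset.prod_pos
    intro ν hν
    have := hfac ν hν t
    positivity
  -- Gam as inverse of a product
  set P : ℝ → ℝ := fun t => ∏ ν ∈ Finset.Icc 1 M, (1 + μ * (min t (τ ν) - min t (τ (ν - 1)))) with hPdef
  have hPpos : ∀ t, 0 < P t := by
    intro t
    apply Finset.prod_pos
    intro ν hν
    exact lt_of_lt_of_le one_pos (hfac ν hν t)
  have hGamP : ∀ t, Gam μ M τ t = (P t)⁻¹ := by
    intro t
    rw [hPdef]
    simp only [Gam]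
    rw [← Finset.prod_inv_distrib]
    exact Finset.prod_congr rfl fun ν _ => one_div _
  -- key product inequality
  have hkey : ∀ t : ℝ, s ≤ t → t ≤ 1 → P s * (1 + μ * (t - s)) ≤ P t := by
    intro t hst ht1
    have hIcc : Finset.Icc 1 M = Finset.Ioc 0 M := Finset.Icc_add_one_left_eq_Ioc 0 M
    have hsplit : ∀ u : ℝ, P u =
        (∏ ν ∈ Finset.Ioc 0 k, (1 + μ * (min u (τ ν) - min u (τ (ν - 1))))) *
        (∏ ν ∈ Finset.Ioc k M, (1 + μ * (min u (τ ν) - min u (τ (ν - 1))))) := by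
      intro u
      rw [hPdef]
      simp only
      rw [hIcc, ← Finset.prod_Ioc_consecutive _ (Nat.zero_le k) hkM]
    -- on Ioc 0 k the factors for s and t agree
    have hlow : ∀ ν ∈ Finset.Ioc 0 k,
        (1 + μ * (min t (τ ν) - min t (τ (ν - 1)))) =
        (1 + μ * (min s (τ ν) - min s (τ (ν - 1)))) := by
      intro ν hν
      rw [Finset.mem_Ioc] at hν
      have h1 : τ ν ≤ s := hks ▸ hmono ν k hν.2 hkM
      have h2 : τ (ν - 1) ≤ s := hks ▸ hmono (ν - 1) k (by omega) hkM
      rw [min_eq_right (h1.trans hst), min_eq_right h1,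
        min_eq_right (h2.trans hst), min_eq_right h2]
    -- on Ioc k M the factors for s are 1
    have hhigh : ∀ ν ∈ Finset.Ioc k M,
        (1 + μ * (min s (τ ν) - min s (τ (ν - 1)))) = 1 := by
      intro ν hν
      rw [Finset.mem_Ioc] at hν
      have h1 : s ≤ τ ν := hks ▸ hmono k ν hν.1.le hν.2
      have h2 : s ≤ τ (ν - 1) := hks ▸ hmono k (ν - 1) (by omega) (by omega)
      rw [min_eq_left h1, min_eq_left h2]
      ring
    have hPs : P s = ∏ ν ∈ Finset.Ioc 0 k, (1 + μ * (min s (τ ν) - min s (τ (ν - 1)))) := by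
      rw [hsplit s, Finset.prod_congr rfl hhigh]
      simp
    -- sum of increments over Ioc k M equals t - s
    have htel : ∑ ν ∈ Finset.Ioc k M, (min t (τ ν) - min t (τ (ν - 1))) = t - s := by
      have := telescope_Ioc (fun ν => min t (τ ν)) k M hkM
      rw [this, hτM, hks, min_eq_left ht1, min_eq_right hst]
    have hprodhigh : 1 + μ * (t - s) ≤
        ∏ ν ∈ Finset.Ioc k M, (1 + μ * (min t (τ ν) - min t (τ (ν - 1)))) := by
      have hg : ∀ ν ∈ Finset.Ioc k M, 0 ≤ μ * (min t (τ ν) - min t (τ (ν - 1))) := by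
        intro ν hν
        rw [Finset.mem_Ioc] at hν
        exact mul_nonneg hμ.le (hδ ν (Finset.mem_Icc.mpr ⟨by omega, hν.2⟩) t)
      have := one_add_sum_le_prod' (Finset.Ioc k M)
        (fun ν => μ * (min t (τ ν) - min t (τ (ν - 1)))) hg
      rw [← Finset.mul_sum, htel] at this
      exact this
    calc P s * (1 + μ * (t - s))
        ≤ (∏ ν ∈ Finset.Ioc 0 k, (1 + μ * (min s (τ ν) - min s (τ (ν - 1))))) *
          (∏ ν ∈ Finset.Ioc k M, (1 + μ * (min t (τ ν) - min t (τ (ν - 1))))) := by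
          rw [hPs]
          apply mul_le_mul_of_nonneg_left hprodhigh
          rw [← hPs]
          exact (hPpos s).le
      _ = P t := by rw [hsplit t, Finset.prod_congr rfl hlow]
  -- pointwise bound on the integrand
  have hbound : ∀ t ∈ Set.Icc s 1,
      Gam μ M τ t ^ 2 / Gam μ M τ s ^ 2 ≤ ((1 + μ * (t - s))⁻¹) ^ 2 := by
    intro t ht
    obtain ⟨hst, ht1⟩ := ht
    have hden : (0:ℝ) < 1 + μ * (t - s) := by nlinarith
    have h1 : Gam μ M τ t ≤ Gam μ M τ s * (1 + μ * (t - s))⁻¹ := by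
      rw [hGamP, hGamP, ← mul_inv]
      exact inv_anti₀ (mul_pos (hPpos s) hden) (hkey t hst ht1)
    have h2 : Gam μ M τ t / Gam μ M τ s ≤ (1 + μ * (t - s))⁻¹ := by
      rw [div_le_iff₀ (hGpos s)]
      calc Gam μ M τ t ≤ Gam μ M τ s * (1 + μ * (t - s))⁻¹ := h1
        _ = (1 + μ * (t - s))⁻¹ * Gam μ M τ s := by ring
    calc Gam μ M τ t ^ 2 / Gam μ M τ s ^ 2 = (Gam μ M τ t / Gam μ M τ s) ^ 2 := by
          rw [div_pow]
      _ ≤ ((1 + μ * (t - s))⁻¹) ^ 2 :=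
          pow_le_pow_left₀ (div_nonneg (hGpos t).le (hGpos s).le) h2 2
  -- continuity and integrability
  have hcont : Continuous (Gam μ M τ) := by
    apply continuous_finset_prod
    intro ν hν
    apply Continuous.div continuous_const
    · fun_prop
    · intro t
      exact ne_of_gt (lt_of_lt_of_le one_pos (hfac ν hν t))
  have hInt1 : IntervalIntegrable
      (fun t => Gam μ M τ t ^ 2 / Gam μ M τ s ^ 2) volume s 1 :=
    (((hcont.pow 2).div_const _)).intervalIntegrable s 1
  have hdenIcc : ∀ t ∈ Set.Icc s 1, (0:ℝ) < 1 + μ * (t - s) := by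
    intro t ht
    nlinarith [ht.1]
  have hcontg : ContinuousOn (fun t => ((1 + μ * (t - s))⁻¹) ^ 2) (Set.uIcc s 1) := by
    rw [Set.uIcc_of_le hs1]
    apply ContinuousOn.pow
    apply ContinuousOn.inv₀ (by fun_prop)
    intro t ht
    exact ne_of_gt (hdenIcc t ht)
  have hInt2 : IntervalIntegrable
      (fun t => ((1 + μ * (t - s))⁻¹) ^ 2) volume s 1 :=
    hcontg.intervalIntegrable
  have hmonoInt := intervalIntegral.integral_mono_on hs1 hInt1 hInt2 hbound
  -- compute the right integral via an antiderivative
  have hderiv : ∀ t ∈ Set.uIcc s 1,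
      HasDerivAt (fun u => -(μ⁻¹ * (1 + μ * (u - s))⁻¹)) (((1 + μ * (t - s))⁻¹) ^ 2) t := by
    intro t ht
    rw [Set.uIcc_of_le hs1] at ht
    have hden : (0:ℝ) < 1 + μ * (t - s) := hdenIcc t ht
    have h0 : HasDerivAt (fun u : ℝ => 1 + μ * (u - s)) μ t := by
      simpa using (((hasDerivAt_id t).sub_const s).const_mul μ).const_add 1
    have h1 := (h0.inv (ne_of_gt hden)).const_mul μ⁻¹
    have h2 := h1.neg
    have hμ0 : μ ≠ 0 := hμ.ne'
    exact h2.congr_deriv (by field_simp)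
  have hval : ∫ t in s..(1:ℝ), ((1 + μ * (t - s))⁻¹) ^ 2 =
      -(μ⁻¹ * (1 + μ * ((1:ℝ) - s))⁻¹) - -(μ⁻¹ * (1 + μ * (s - s))⁻¹) :=
    intervalIntegral.integral_eq_sub_of_hasDerivAt hderiv hInt2
  have hfin : -(μ⁻¹ * (1 + μ * ((1:ℝ) - s))⁻¹) - -(μ⁻¹ * (1 + μ * (s - s))⁻¹) ≤ 2 / μ := by
    have hpos : (0:ℝ) < 1 + μ * (1 - s) := by nlinarith
    have hinv : (0:ℝ) ≤ (1 + μ * (1 - s))⁻¹ := le_of_lt (inv_pos.mpr hpos)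
    have hμi : (0:ℝ) < μ⁻¹ := inv_pos.mpr hμ
    have : -(μ⁻¹ * (1 + μ * ((1:ℝ) - s))⁻¹) - -(μ⁻¹ * (1 + μ * (s - s))⁻¹)
        = μ⁻¹ - μ⁻¹ * (1 + μ * (1 - s))⁻¹ := by
      simp only [sub_self, mul_zero, add_zero, inv_one, mul_one]
      ring
    rw [this, div_eq_mul_inv]
    nlinarith
  calc ∫ t in s..(1:ℝ), Gam μ M τ t ^ 2 / Gam μ M τ s ^ 2
      ≤ ∫ t in s..(1:ℝ), ((1 + μ * (t - s))⁻¹) ^ 2 := hmonoInt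
    _ ≤ 2 / μ := by rw [hval]; exact hfin
end

section
/- There exists a constant C > 0, depending at most on d and in particular independent of I, n, i, ℓ and j, with the following property. Let 0 = τ₀ < τ₁ < … < τ_M = 1 be the merged partition generated by the uniform grids t_{ℓ,i} = ℓ/n_i, let n* = max_{i∈I} n_i, and for j ∈ ℕ_{≥1}^d let Γ_j(t) = ∏_{ν=1}^M 1/(1 + μ_j·(t∧τ_ν − t∧τ_{ν−1})). Then for every i ∈ I, every j ∈ ℕ_{≥1}^d and every ℓ ∈ {0,…,n_i−1}: ∫_{t_{ℓ,i}}^1 ( Γ_j(t)/Γ_j(t_{ℓ,i}) − exp(−μ_j·(t − t_{ℓ,i})) )² dt ≤ C/n*. -/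
open Real MeasureTheory Finset

/- ## Auxiliary product inequalities -/

lemma aux_one_add_sum_le_prod {F : Finset ℕ} {x : ℕ → ℝ} (hx : ∀ ν ∈ F, 0 ≤ x ν) :
    1 + ∑ ν ∈ F, x ν ≤ ∏ ν ∈ F, (1 + x ν) := by
  induction F using Finset.cons_induction with
  | empty => simp
  | cons a F ha ih =>
    rw [Finset.sum_cons, Finset.prod_cons]
    have h1 : 0 ≤ x a := hx a (Finset.mem_cons_self a F)
    have h2 : ∀ ν ∈ F, 0 ≤ x ν := fun ν hν => hx ν (Finset.mem_cons_of_mem hν)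
    have h3 := ih h2
    have h4 : 0 ≤ ∑ ν ∈ F, x ν := Finset.sum_nonneg h2
    nlinarith

lemma aux_exp_le_prod {F : Finset ℕ} {x : ℕ → ℝ} (hx : ∀ ν ∈ F, 0 ≤ x ν) :
    Real.exp (-∑ ν ∈ F, x ν) ≤ ∏ ν ∈ F, 1 / (1 + x ν) := by
  have : Real.exp (-∑ ν ∈ F, x ν) = ∏ ν ∈ F, Real.exp (-x ν) := by
    rw [← Real.exp_sum]; simp
  rw [this]
  apply Finset.prod_le_prod (fun ν _ => (Real.exp_pos _).le)
  intro ν hν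
  have h1 : 0 < 1 + x ν := by have := hx ν hν; linarith
  rw [div_eq_inv_mul, mul_one, ← Real.exp_log h1, ← Real.exp_neg, Real.exp_le_exp, neg_le_neg_iff]
  calc Real.log (1 + x ν) ≤ (1 + x ν) - 1 := Real.log_le_sub_one_of_pos h1
  _ = x ν := by ring

lemma aux_exp_sub_sq_le (x : ℝ) (hx : 0 ≤ x) : Real.exp (x - x^2) ≤ 1 + x := by
  have h1 : 0 < 1 + x := by linarith
  rw [← Real.exp_log h1, Real.exp_le_exp]
  have h2 : Real.log (1+x)⁻¹ ≤ (1+x)⁻¹ - 1 := Real.log_le_sub_one_of_pos (by positivity)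
  rw [Real.log_inv] at h2
  have h3 : Real.log (1+x) ≥ 1 - (1+x)⁻¹ := by linarith
  have h4 : (1 - (1+x)⁻¹) * (1+x) = x := by field_simp; ring
  nlinarith [pow_nonneg hx 3, sq_nonneg x]

lemma aux_prod_mul_exp_le {F : Finset ℕ} {x : ℕ → ℝ} (hx : ∀ ν ∈ F, 0 ≤ x ν) :
    (∏ ν ∈ F, 1 / (1 + x ν)) * Real.exp (-∑ ν ∈ F, (x ν)^2) ≤ Real.exp (-∑ ν ∈ F, x ν) := by
  have e1 : Real.exp (-∑ ν ∈ F, (x ν)^2) = ∏ ν ∈ F, Real.exp (-(x ν)^2) := by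
    rw [← Real.exp_sum]; simp
  have e2 : Real.exp (-∑ ν ∈ F, x ν) = ∏ ν ∈ F, Real.exp (-x ν) := by
    rw [← Real.exp_sum]; simp
  rw [e1, e2, ← Finset.prod_mul_distrib]
  apply Finset.prod_le_prod
  · intro ν hν
    have h1 : 0 < 1 + x ν := by have := hx ν hν; linarith
    positivity
  · intro ν hν
    have h0 := hx ν hν
    have h1 : 0 < 1 + x ν := by linarith
    have key := aux_exp_sub_sq_le (x ν) h0
    have k2 : Real.exp (-(x ν)^2) ≤ (1 + x ν) * Real.exp (-x ν) := by
      have := mul_le_mul_of_nonneg_right key (Real.exp_pos (-x ν)).le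
      rwa [← Real.exp_add, show x ν - (x ν)^2 + -x ν = -(x ν)^2 by ring] at this
    rw [div_eq_inv_mul, mul_one]
    rw [inv_mul_le_iff₀ h1]
    linarith

/- ## Telescoping sums -/

lemma aux_sum_Ioc_telescope (g : ℕ → ℝ) {a b : ℕ} (h : a ≤ b) :
    ∑ ν ∈ Finset.Ioc a b, (g ν - g (ν - 1)) = g b - g a := by
  induction b, h using Nat.le_induction with
  | base => simp
  | succ b hab ih =>
    rw [Finset.sum_Ioc_succ_top hab, ih]
    simp

/- ## Partition lemmas -/

section part
variable {d : ℕ} {I : Finset (Fin d → ℕ+)} {n : (Fin d → ℕ+) → ℕ+} {M : ℕ} {τ : ℕ → ℝ}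

lemma aux_mono (hP : IsMergedPartition I n M τ) {a b : ℕ} (hab : a ≤ b) (hb : b ≤ M) :
    τ a ≤ τ b := by
  obtain ⟨-, -, hs, -⟩ := hP
  induction b, hab using Nat.le_induction with
  | base => exact le_rfl
  | succ b hab ih =>
    exact le_trans (ih (by omega)) (hs b (by omega)).le

lemma aux_strict_mono (hP : IsMergedPartition I n M τ) {a b : ℕ} (hab : a < b) (hb : b ≤ M) :
    τ a < τ b := by
  have hs := hP.2.2.1
  have h1 : τ a ≤ τ (b-1) := by
    apply aux_mono hP (by omega) (by omega)
  have h2 : τ (b-1) < τ b := by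
    have := hs (b-1) (by omega)
    rwa [show b - 1 + 1 = b by omega] at this
  linarith

lemma aux_mem_partition (hP : IsMergedPartition I n M τ) {i : Fin d → ℕ+} (hi : i ∈ I)
    {ℓ : ℕ} (hℓ : ℓ ≤ (n i : ℕ)) :
    ∃ ν ≤ M, τ ν = (ℓ : ℝ) / ((n i : ℕ) : ℝ) := by
  obtain ⟨-, -, -, himg⟩ := hP
  have : ((ℓ : ℝ) / ((n i : ℕ) : ℝ)) ∈ τ '' (Set.Iic M) := by
    rw [himg]; exact ⟨i, hi, ℓ, hℓ, rfl⟩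
  obtain ⟨ν, hν, hτν⟩ := this
  exact ⟨ν, hν, hτν⟩

lemma aux_mesh (hP : IsMergedPartition I n M τ) {i : Fin d → ℕ+} (hi : i ∈ I)
    {ν : ℕ} (hν : ν < M) :
    τ (ν + 1) ≤ τ ν + 1 / ((n i : ℕ) : ℝ) := by
  set N : ℕ := (n i : ℕ) with hN
  have hN0 : (0:ℝ) < (N:ℝ) := by exact_mod_cast (n i).pos
  have h0 : τ 0 = 0 := hP.1
  have h1 : τ M = 1 := hP.2.1
  have hτν0 : 0 ≤ τ ν := h0 ▸ aux_mono hP (Nat.zero_le ν) (by omega)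
  have hτν1 : τ ν < 1 := h1 ▸ aux_strict_mono hP hν le_rfl
  set k : ℕ := ⌊τ ν * N⌋₊ + 1 with hk
  have hkN : k ≤ N := by
    have : τ ν * N < N := by nlinarith
    have := Nat.floor_lt (by positivity : (0:ℝ) ≤ τ ν * N) |>.2 (by exact_mod_cast this)
    omega
  have hlt : τ ν < (k : ℝ) / N := by
    rw [lt_div_iff₀ hN0]
    have := Nat.lt_floor_add_one (τ ν * N)
    push_cast [hk]; linarith
  have hle : (k : ℝ) / N ≤ τ ν + 1 / N := by
    have hfl := Nat.floor_le (by positivity : (0:ℝ) ≤ τ ν * N)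
    have hkle : (k : ℝ) ≤ τ ν * N + 1 := by push_cast [hk]; linarith
    rw [div_le_iff₀ hN0]
    have h2 : (τ ν + 1/(N:ℝ)) * N = τ ν * N + 1 := by field_simp
    linarith
  obtain ⟨m, hm, hτm⟩ := aux_mem_partition hP hi hkN
  by_contra hcon
  push_neg at hcon
  have hmgt : ν < m := by
    by_contra h
    push_neg at h
    have := aux_mono hP h (by omega)
    linarith [hτm ▸ this]
  have hmlt : m < ν + 1 := by
    by_contra h
    push_neg at h
    have := aux_mono hP h hm
    rw [hτm] at this
    linarith
  omega

end part

set_option maxHeartbeats 1000000 in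
theorem gam_semigroup_error_bound
    (d : ℕ) (hd : 1 ≤ d) :
    ∃ C : ℝ, 0 < C ∧
      ∀ (I : Finset (Fin d → ℕ+)) (hI : I.Nonempty)
        (n : (Fin d → ℕ+) → ℕ+)
        (M : ℕ) (τ : ℕ → ℝ),
        IsMergedPartition I n M τ →
        ∀ i ∈ I, ∀ (j : Fin d → ℕ+) (ℓ : ℕ), ℓ < (n i : ℕ) →
          ∫ t in ((ℓ : ℝ) / ((n i : ℕ) : ℝ))..(1 : ℝ),
              (Gam (eig j) M τ t / Gam (eig j) M τ ((ℓ : ℝ) / ((n i : ℕ) : ℝ))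
                - Real.exp (-(eig j) * (t - (ℓ : ℝ) / ((n i : ℕ) : ℝ)))) ^ 2
            ≤ C / ((I.sup' hI fun i' => (n i' : ℕ)) : ℝ) := by
  refine ⟨2, by norm_num, ?_⟩
  intro I hI n M τ hP i hi j ℓ hℓ
  have hsup : (((I.sup' hI fun i' => (n i' : ℕ)) : ℕ) : ℝ)
      = (I.sup' hI fun i' => ((n i' : ℕ) : ℝ)) :=
    Finset.comp_sup'_eq_sup'_comp hI (Nat.cast : ℕ → ℝ) (fun x y => Nat.cast_max x y)
  rw [← hsup]
  set μ : ℝ := eig j with hμdef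
  have hμ : 0 < μ := by
    rw [hμdef]; unfold eig
    have hne : (Finset.univ : Finset (Fin d)).Nonempty := by
      rw [Finset.univ_nonempty_iff]
      exact Fin.pos_iff_nonempty.1 (by omega)
    have hsum : (0:ℝ) < ∑ k : Fin d, ((j k : ℕ) : ℝ) ^ 2 := by
      apply Finset.sum_pos (fun k _ => by positivity) hne
    positivity
  set N : ℕ := I.sup' hI fun i' => (n i' : ℕ) with hNdef
  obtain ⟨istar, histar, hNeq⟩ := Finset.exists_mem_eq_sup' hI fun i' => (n i' : ℕ)
  have hN0 : (0:ℝ) < (N:ℝ) := by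
    rw [hNdef, hNeq]; exact_mod_cast (n istar).pos
  set h : ℝ := 1 / (N:ℝ) with hhdef
  have hh0 : 0 < h := by positivity
  set s : ℝ := (ℓ:ℝ)/((n i : ℕ):ℝ) with hsdef
  have hni : (0:ℝ) < ((n i : ℕ):ℝ) := by exact_mod_cast (n i).pos
  have hs0 : 0 ≤ s := by positivity
  have hs1 : s < 1 := by
    rw [hsdef, div_lt_one hni]; exact_mod_cast hℓ
  obtain ⟨ν₀, hν₀M, hτν₀⟩ := aux_mem_partition hP hi hℓ.le
  rw [← hsdef] at hτν₀
  -- the mesh of the merged partition is at most h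
  have hmesh : ∀ ν, 0 < ν → ν ≤ M → τ ν - τ (ν-1) ≤ h := by
    intro ν h1 h2
    have hm := aux_mesh hP histar (show ν - 1 < M by omega)
    rw [show ν - 1 + 1 = ν by omega] at hm
    rw [hhdef, hNdef, hNeq]
    linarith
  -- positivity of the factors
  have hfac : ∀ (ν : ℕ), 0 < ν → ν ≤ M → ∀ t : ℝ,
      0 < 1 + μ * (min t (τ ν) - min t (τ (ν-1))) := by
    intro ν h1 h2 t
    have hττ : τ (ν-1) ≤ τ ν := aux_mono hP (by omega) h2
    have hmin : 0 ≤ min t (τ ν) - min t (τ (ν-1)) :=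
      sub_nonneg.2 (min_le_min le_rfl hττ)
    nlinarith
  have hGam_pos : ∀ t : ℝ, 0 < Gam μ M τ t := by
    intro t
    unfold Gam
    apply Finset.prod_pos
    intro ν hν
    rw [Finset.mem_Icc] at hν
    exact one_div_pos.2 (hfac ν (by omega) hν.2 t)
  -- the partial product
  set P : ℝ → ℝ := fun t => ∏ ν ∈ Finset.Ioc ν₀ M, 1/(1+μ*(min t (τ ν) - min t (τ (ν-1))))
    with hPdef
  have hP_pos : ∀ t : ℝ, 0 < P t := by
    intro t
    apply Finset.prod_pos
    intro ν hν
    rw [Finset.mem_Ioc] at hν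
    exact one_div_pos.2 (hfac ν (by omega) hν.2 t)
  clear_value μ N h s
  have hIcc : Finset.Icc 1 M = Finset.Ioc 0 M := Finset.Icc_add_one_left_eq_Ioc 0 M
  -- the ratio formula
  have hratio : ∀ t : ℝ, s ≤ t → Gam μ M τ t / Gam μ M τ s = P t := by
    intro t ht
    have key : Gam μ M τ t = Gam μ M τ s * P t := by
      unfold Gam
      rw [hIcc, ← Finset.prod_Ioc_consecutive _ (Nat.zero_le ν₀) hν₀M,
        ← Finset.prod_Ioc_consecutive _ (Nat.zero_le ν₀) hν₀M]
      have e1 : ∏ ν ∈ Finset.Ioc 0 ν₀, (1 / (1 + μ * (min t (τ ν) - min t (τ (ν-1)))))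
          = ∏ ν ∈ Finset.Ioc 0 ν₀, (1 / (1 + μ * (min s (τ ν) - min s (τ (ν-1))))) := by
        apply Finset.prod_congr rfl
        intro ν hν
        rw [Finset.mem_Ioc] at hν
        have hν1 : τ ν ≤ s := hτν₀ ▸ aux_mono hP (by omega) hν₀M
        have hν2 : τ (ν-1) ≤ s := hτν₀ ▸ aux_mono hP (by omega) hν₀M
        rw [min_eq_right (le_trans hν1 ht), min_eq_right (le_trans hν2 ht),
          min_eq_right hν1, min_eq_right hν2]
      have e2 : ∏ ν ∈ Finset.Ioc ν₀ M, (1 / (1 + μ * (min s (τ ν) - min s (τ (ν-1))))) = 1 := by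
        apply Finset.prod_eq_one
        intro ν hν
        rw [Finset.mem_Ioc] at hν
        have hν1 : s ≤ τ ν := hτν₀ ▸ aux_mono hP (by omega) hν.2
        have hν2 : s ≤ τ (ν-1) := hτν₀ ▸ aux_mono hP (by omega) (by omega)
        rw [min_eq_left hν1, min_eq_left hν2]
        simp
      rw [e1, e2, mul_one, hPdef]
    rw [key, mul_comm, mul_div_assoc, div_self (ne_of_gt (hGam_pos s)), mul_one]
  -- pointwise bounds
  have hbound : ∀ t : ℝ, s ≤ t → t ≤ 1 →
      0 ≤ P t - Real.exp (-μ*(t-s)) ∧ P t ≤ 1/(1+μ*(t-s)) ∧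
        P t - Real.exp (-μ*(t-s)) ≤ P t * (μ^2*h*(t-s)) := by
    intro t hst ht1
    set x : ℕ → ℝ := fun ν => μ * (min t (τ ν) - min t (τ (ν-1))) with hxdef
    have hxnn : ∀ ν ∈ Finset.Ioc ν₀ M, 0 ≤ x ν := by
      intro ν hν
      rw [Finset.mem_Ioc] at hν
      have hττ : τ (ν-1) ≤ τ ν := aux_mono hP (by omega) hν.2
      have hmin : 0 ≤ min t (τ ν) - min t (τ (ν-1)) :=
        sub_nonneg.2 (min_le_min le_rfl hττ)
      exact mul_nonneg hμ.le hmin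
    have hsum : ∑ ν ∈ Finset.Ioc ν₀ M, x ν = μ*(t-s) := by
      have : ∑ ν ∈ Finset.Ioc ν₀ M, x ν
          = μ * ∑ ν ∈ Finset.Ioc ν₀ M, ((fun k => min t (τ k)) ν - (fun k => min t (τ k)) (ν-1)) := by
        rw [Finset.mul_sum]
      rw [this, aux_sum_Ioc_telescope _ hν₀M]
      rw [hP.2.1, min_eq_left ht1, hτν₀, min_eq_right hst]
    have hxle : ∀ ν ∈ Finset.Ioc ν₀ M, x ν ≤ μ * h := by
      intro ν hν
      rw [Finset.mem_Ioc] at hν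
      have hττ : τ (ν-1) ≤ τ ν := aux_mono hP (by omega) hν.2
      have hmindiff : min t (τ ν) - min t (τ (ν-1)) ≤ τ ν - τ (ν-1) := by
        rcases le_total t (τ (ν-1)) with hc | hc
        · rw [min_eq_left hc, min_eq_left (le_trans hc hττ)]
          linarith
        · rw [min_eq_right hc]
          have := min_le_left t (τ ν)
          have := min_le_right t (τ ν)
          linarith [min_le_right t (τ ν)]
      have hm := hmesh ν (by omega) hν.2
      have : min t (τ ν) - min t (τ (ν-1)) ≤ h := le_trans hmindiff hm
      exact mul_le_mul_of_nonneg_left this hμ.le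
    have hPt : P t = ∏ ν ∈ Finset.Ioc ν₀ M, 1/(1+ x ν) := rfl
    have hu0 : 0 ≤ t - s := by linarith
    have hsum2 : ∑ ν ∈ Finset.Ioc ν₀ M, (x ν)^2 ≤ μ*h*(μ*(t-s)) := by
      rw [← hsum, Finset.mul_sum]
      apply Finset.sum_le_sum
      intro ν hν
      have h1 := hxnn ν hν
      have h2 := hxle ν hν
      nlinarith
    refine ⟨?_, ?_, ?_⟩
    · rw [sub_nonneg, neg_mul, ← hsum, hPt]
      exact aux_exp_le_prod hxnn
    · rw [hPt]
      have h1 := aux_one_add_sum_le_prod hxnn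
      have h2 : (0:ℝ) < 1 + ∑ ν ∈ Finset.Ioc ν₀ M, x ν := by
        have := Finset.sum_nonneg hxnn; linarith
      have h4 : ∏ ν ∈ Finset.Ioc ν₀ M, (1:ℝ)/(1+ x ν)
          = 1 / ∏ ν ∈ Finset.Ioc ν₀ M, (1 + x ν) := by
        simp [one_div, ← Finset.prod_inv_distrib]
      rw [h4, ← hsum]
      exact one_div_le_one_div_of_le h2 h1
    · have hA : P t * Real.exp (-∑ ν ∈ Finset.Ioc ν₀ M, (x ν)^2)
          ≤ Real.exp (-μ*(t-s)) := by
        rw [neg_mul, ← hsum, hPt]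
        exact aux_prod_mul_exp_le hxnn
      have hexp1 : 1 - ∑ ν ∈ Finset.Ioc ν₀ M, (x ν)^2
          ≤ Real.exp (-∑ ν ∈ Finset.Ioc ν₀ M, (x ν)^2) := by
        have := Real.add_one_le_exp (-∑ ν ∈ Finset.Ioc ν₀ M, (x ν)^2)
        linarith
      have hPp := hP_pos t
      nlinarith [mul_le_mul_of_nonneg_left hexp1 hPp.le]
  clear_value P
  have hμne : μ ≠ 0 := ne_of_gt hμ
  have hhne : h ≠ 0 := ne_of_gt hh0
  -- continuity
  have hGc : Continuous (Gam μ M τ) := by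
    unfold Gam
    apply continuous_finset_prod
    intro ν hν
    rw [Finset.mem_Icc] at hν
    apply Continuous.div continuous_const
    · exact continuous_const.add (continuous_const.mul
        ((continuous_id.min continuous_const).sub (continuous_id.min continuous_const)))
    · intro t
      exact ne_of_gt (hfac ν (by omega) hν.2 t)
  have hfc : Continuous (fun t => (Gam μ M τ t / Gam μ M τ s - Real.exp (-μ*(t-s)))^2) := by
    apply Continuous.pow
    apply Continuous.sub
    · exact hGc.div_const _
    · exact Real.continuous_exp.comp (continuous_const.mul (continuous_id.sub continuous_const))
  set u₁ : ℝ := 1/(μ^2*h) with hu₁def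
  have hu₁0 : 0 < u₁ := by
    rw [hu₁def]
    exact one_div_pos.2 (mul_pos (pow_pos hμ 2) hh0)
  set m : ℝ := min 1 (s + u₁) with hmdef
  have hsm : s ≤ m := le_min hs1.le (by linarith)
  have hm1 : m ≤ 1 := min_le_left _ _
  have hms : m - s ≤ u₁ := by
    have := min_le_right 1 (s + u₁)
    have h2 : m ≤ s + u₁ := by rw [hmdef]; exact this
    linarith
  clear_value u₁ m
  have hint1 : IntervalIntegrable
      (fun t => (Gam μ M τ t / Gam μ M τ s - Real.exp (-μ*(t-s)))^2) volume s m :=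
    hfc.intervalIntegrable s m
  have hint2 : IntervalIntegrable
      (fun t => (Gam μ M τ t / Gam μ M τ s - Real.exp (-μ*(t-s)))^2) volume m 1 :=
    hfc.intervalIntegrable m 1
  rw [← intervalIntegral.integral_add_adjacent_intervals hint1 hint2]
  -- first piece
  have hp1 : ∫ t in s..m, (Gam μ M τ t / Gam μ M τ s - Real.exp (-μ*(t-s)))^2
      ≤ 1/(N:ℝ) := by
    have hpoint : ∀ t ∈ Set.Icc s m,
        (Gam μ M τ t / Gam μ M τ s - Real.exp (-μ*(t-s)))^2 ≤ (μ*h)^2 := by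
      intro t ht
      obtain ⟨ht1, ht2⟩ := ht
      have htle1 : t ≤ 1 := le_trans ht2 hm1
      obtain ⟨hb1, hb2, hb3⟩ := hbound t ht1 htle1
      rw [hratio t ht1]
      have hu0 : (0:ℝ) ≤ t - s := by linarith
      have h1p : 0 < 1 + μ*(t-s) := by nlinarith
      have hDle : P t - Real.exp (-μ*(t-s)) ≤ μ * h := by
        have hc1 : P t * (μ^2*h*(t-s)) ≤ (1/(1+μ*(t-s))) * (μ^2*h*(t-s)) := by
          exact mul_le_mul_of_nonneg_right hb2 (mul_nonneg (mul_nonneg (pow_nonneg hμ.le 2) hh0.le) hu0)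
        have hc2 : (1/(1+μ*(t-s))) * (μ^2*h*(t-s)) ≤ μ*h := by
          rw [div_mul_eq_mul_div, one_mul, div_le_iff₀ h1p]
          nlinarith
        linarith
      nlinarith
    calc ∫ t in s..m, (Gam μ M τ t / Gam μ M τ s - Real.exp (-μ*(t-s)))^2
        ≤ ∫ _t in s..m, (μ*h)^2 :=
          intervalIntegral.integral_mono_on hsm hint1 intervalIntegrable_const hpoint
      _ = (m - s) * (μ*h)^2 := by
          rw [intervalIntegral.integral_const, smul_eq_mul]
      _ ≤ u₁ * (μ*h)^2 := mul_le_mul_of_nonneg_right hms (by positivity)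
      _ = h := by rw [hu₁def]; field_simp
      _ = 1/(N:ℝ) := hhdef
  -- second piece
  have hp2 : ∫ t in m..1, (Gam μ M τ t / Gam μ M τ s - Real.exp (-μ*(t-s)))^2
      ≤ 1/(N:ℝ) := by
    rcases le_or_gt (s + u₁) 1 with hcase | hcase
    · have hmeq : m = s + u₁ := by rw [hmdef]; exact min_eq_right hcase
      set F : ℝ → ℝ := fun t => -(1/μ) * (1+μ*(t-s))⁻¹ with hFdef
      set B : ℝ → ℝ := fun t => ((1+μ*(t-s))^2)⁻¹ with hBdef
      have hpos : ∀ t ∈ Set.uIcc m 1, 0 < 1 + μ*(t-s) := by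
        intro t ht
        rw [Set.uIcc_of_le hm1] at ht
        have hst : s ≤ t := le_trans hsm ht.1
        nlinarith
      have hF : ∀ t ∈ Set.uIcc m 1, HasDerivAt F (B t) t := by
        intro t ht
        have h1 : HasDerivAt (fun r => 1 + μ*(r-s)) μ t := by
          simpa using (((hasDerivAt_id t).sub_const s).const_mul μ).const_add 1
        have h2 := (h1.inv (ne_of_gt (hpos t ht))).const_mul (-(1/μ))
        refine h2.congr_deriv ?_
        rw [hBdef]
        field_simp
      have hBc : ContinuousOn B (Set.uIcc m 1) := by
        apply ContinuousOn.inv₀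
        · exact ((continuous_const.add
            (continuous_const.mul (continuous_id.sub continuous_const))).pow 2).continuousOn
        · intro t ht
          exact ne_of_gt (pow_pos (hpos t ht) 2)
      have hBint : IntervalIntegrable B volume m 1 := hBc.intervalIntegrable
      have hFTC := intervalIntegral.integral_eq_sub_of_hasDerivAt hF hBint
      have hmono : ∫ t in m..1, (Gam μ M τ t / Gam μ M τ s - Real.exp (-μ*(t-s)))^2
          ≤ ∫ t in m..1, B t := by
        apply intervalIntegral.integral_mono_on hm1 hint2 hBint
        intro t ht
        obtain ⟨ht1, ht2⟩ := ht
        have hst : s ≤ t := le_trans hsm ht1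
        obtain ⟨hb1, hb2, hb3⟩ := hbound t hst ht2
        rw [hratio t hst]
        have hu0 : (0:ℝ) ≤ t - s := by linarith
        have h1p : 0 < 1 + μ*(t-s) := by nlinarith
        have hD2 : P t - Real.exp (-μ*(t-s)) ≤ 1/(1+μ*(t-s)) := by
          have := Real.exp_pos (-μ*(t-s))
          linarith
        have hBval : B t = (1/(1+μ*(t-s)))^2 := by
          rw [hBdef]
          field_simp
        rw [hBval]
        have hq : (0:ℝ) < 1/(1+μ*(t-s)) := one_div_pos.2 h1p
        nlinarith
      rw [hFTC] at hmono
      have hFb : F 1 - F m ≤ 1/(N:ℝ) := by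
        have hm_s : m - s = u₁ := by rw [hmeq]; ring
        have hpos1 : 0 < 1 + μ*(1-s) := by nlinarith
        have hposm : 0 < 1 + μ*(m-s) := by nlinarith [mul_nonneg hμ.le (by linarith : (0:ℝ) ≤ m - s)]
        have hF1 : F 1 ≤ 0 := by
          rw [hFdef]
          simp only
          have : 0 < (1+μ*(1-s))⁻¹ := inv_pos.2 hpos1
          nlinarith [mul_pos (one_div_pos.2 hμ) this]
        have hFm : -F m ≤ 1/(N:ℝ) := by
          rw [hFdef]
          simp only
          rw [neg_mul, neg_neg, hm_s]
          have hμu : μ * u₁ = 1/(μ*h) := by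
            rw [hu₁def]
            field_simp
          have h1 : (1+μ*u₁)⁻¹ ≤ (μ*u₁)⁻¹ := by
            apply inv_anti₀
            · rw [hμu]; exact one_div_pos.2 (mul_pos hμ hh0)
            · linarith
          calc (1/μ) * (1+μ*u₁)⁻¹ ≤ (1/μ) * (μ*u₁)⁻¹ := by
                exact mul_le_mul_of_nonneg_left h1 (one_div_pos.2 hμ).le
            _ = h := by rw [hμu]; field_simp
            _ = 1/(N:ℝ) := hhdef
        linarith
      linarith
    · have hmeq : m = 1 := by rw [hmdef]; exact min_eq_left (by linarith)
      rw [hmeq, intervalIntegral.integral_same]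
      positivity
  have h2N : (2:ℝ)/(N:ℝ) = 1/(N:ℝ) + 1/(N:ℝ) := by ring
  rw [h2N]
  exact add_le_add hp1 hp2
end

section
/- There exists a constant C > 0 such that for every real number u > 0 the series ∑_{k=0}^∞ ( (1+u)^{−k} − exp(−k·u) )² converges and satisfies ∑_{k=0}^∞ ( (1+u)^{−k} − exp(−k·u) )² ≤ C. -/
open Real

theorem geometric_exponential_sq_diff_summable_uniform_bound :
    ∃ C : ℝ, 0 < C ∧
      ∀ u : ℝ, 0 < u →
        Summable (fun k : ℕ => ((1 + u)⁻¹ ^ k - Real.exp (-(k : ℝ) * u)) ^ 2) ∧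
        ∑' k : ℕ, ((1 + u)⁻¹ ^ k - Real.exp (-(k : ℝ) * u)) ^ 2 ≤ C := by
  refine ⟨1, one_pos, fun u hu => ?_⟩
  set a : ℝ := (1 + u)⁻¹ with ha_def
  set b : ℝ := Real.exp (-u) with hb_def
  have h1u : (0:ℝ) < 1 + u := by linarith
  have ha0 : 0 < a := inv_pos.2 h1u
  have haa : a * (1 + u) = 1 := inv_mul_cancel₀ (ne_of_gt h1u)
  have ha1 : a < 1 := by
    rw [ha_def]
    rw [inv_lt_one_iff₀]; right; linarith
  have hb0 : 0 < b := Real.exp_pos _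
  have hba : b ≤ a := by
    have h1 : 1 + u ≤ Real.exp u := by
      have := Real.add_one_le_exp u; linarith
    rw [hb_def, Real.exp_neg, ha_def]
    exact inv_anti₀ h1u h1
  have hab : a - b ≤ u ^ 2 * a := by
    have h1 : 1 - u ≤ b := by
      have := Real.add_one_le_exp (-u); rw [← hb_def] at this; linarith
    nlinarith [haa]
  -- exp(-(k)u) = b^k
  have hexp : ∀ k : ℕ, Real.exp (-(k : ℝ) * u) = b ^ k := by
    intro k
    rw [hb_def, ← Real.exp_nat_mul]
    ring_nf
  set r : ℝ := a ^ 2 with hr_def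
  have hr0 : 0 < r := by positivity
  have hr1 : r < 1 := by nlinarith
  have hrnorm : ‖r‖ < 1 := by rw [Real.norm_eq_abs, abs_of_pos hr0]; exact hr1
  -- key inductive bound
  have key : ∀ k : ℕ, a ^ (k + 1) - b ^ (k + 1) ≤ ((k : ℝ) + 1) * (a - b) * a ^ k := by
    intro k
    induction k with
    | zero => simp
    | succ n ih =>
      have hbn : b ^ (n + 1) ≤ a ^ (n + 1) := pow_le_pow_left₀ hb0.le hba _
      have h2 : a * (a ^ (n + 1) - b ^ (n + 1)) ≤ a * (((n : ℝ) + 1) * (a - b) * a ^ n) :=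
        mul_le_mul_of_nonneg_left ih ha0.le
      have h3 : (a - b) * b ^ (n + 1) ≤ (a - b) * a ^ (n + 1) :=
        mul_le_mul_of_nonneg_left hbn (sub_nonneg.2 hba)
      have heq : a ^ (n + 2) - b ^ (n + 2)
          = a * (a ^ (n + 1) - b ^ (n + 1)) + (a - b) * b ^ (n + 1) := by ring
      push_cast
      rw [heq]
      have : a * (((n : ℝ) + 1) * (a - b) * a ^ n) + (a - b) * a ^ (n + 1)
          = ((n : ℝ) + 1 + 1) * (a - b) * a ^ (n + 1) := by ring
      linarith [h2, h3, this.le, this.ge]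
  -- pointwise bound on terms
  have hnn : ∀ k : ℕ, 0 ≤ a ^ k - b ^ k := fun k =>
    sub_nonneg.2 (pow_le_pow_left₀ hb0.le hba k)
  have hbound : ∀ k : ℕ, (a ^ k - b ^ k) ^ 2 ≤ u ^ 2 * ((k : ℝ) * r ^ k) := by
    intro k
    cases k with
    | zero => simp
    | succ n =>
      have hd1 : a ^ (n + 1) - b ^ (n + 1) ≤ a ^ (n + 1) := by
        have : 0 ≤ b ^ (n + 1) := by positivity
        linarith
      have hd2 : a ^ (n + 1) - b ^ (n + 1) ≤ ((n : ℝ) + 1) * (u ^ 2 * a) * a ^ n := by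
        calc a ^ (n + 1) - b ^ (n + 1) ≤ ((n : ℝ) + 1) * (a - b) * a ^ n := key n
          _ ≤ ((n : ℝ) + 1) * (u ^ 2 * a) * a ^ n := by
              have han : (0:ℝ) ≤ a ^ n := by positivity
              have : ((n : ℝ) + 1) * (a - b) ≤ ((n : ℝ) + 1) * (u ^ 2 * a) := by
                have hn : (0:ℝ) ≤ (n : ℝ) + 1 := by positivity
                exact mul_le_mul_of_nonneg_left hab hn
              exact mul_le_mul_of_nonneg_right this han
      have hd0 : 0 ≤ a ^ (n + 1) - b ^ (n + 1) := hnn (n + 1)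
      have : (a ^ (n + 1) - b ^ (n + 1)) ^ 2
          ≤ a ^ (n + 1) * (((n : ℝ) + 1) * (u ^ 2 * a) * a ^ n) := by
        rw [sq]
        exact mul_le_mul hd1 hd2 hd0 (by positivity)
      calc (a ^ (n + 1) - b ^ (n + 1)) ^ 2
          ≤ a ^ (n + 1) * (((n : ℝ) + 1) * (u ^ 2 * a) * a ^ n) := this
        _ = u ^ 2 * (((n : ℕ) + 1 : ℝ) * r ^ (n + 1)) := by
            rw [hr_def]; push_cast; ring
        _ = u ^ 2 * (((n + 1 : ℕ) : ℝ) * r ^ (n + 1)) := by push_cast; ring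
  -- summability of the majorant
  have hmaj : Summable (fun k : ℕ => u ^ 2 * ((k : ℝ) * r ^ k)) := by
    have := (summable_pow_mul_geometric_of_norm_lt_one 1 hrnorm : Summable fun n : ℕ => (n : ℝ) ^ 1 * r ^ n)
    simpa [pow_one] using this.mul_left (u ^ 2)
  have hterm_eq : (fun k : ℕ => ((1 + u)⁻¹ ^ k - Real.exp (-(k : ℝ) * u)) ^ 2)
      = fun k : ℕ => (a ^ k - b ^ k) ^ 2 := by
    funext k; rw [hexp k]
  have hsummable : Summable (fun k : ℕ => ((1 + u)⁻¹ ^ k - Real.exp (-(k : ℝ) * u)) ^ 2) := by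
    rw [hterm_eq]
    refine Summable.of_nonneg_of_le (fun k => by positivity) hbound hmaj
  refine ⟨hsummable, ?_⟩
  have htsum_le : ∑' k : ℕ, ((1 + u)⁻¹ ^ k - Real.exp (-(k : ℝ) * u)) ^ 2
      ≤ ∑' k : ℕ, u ^ 2 * ((k : ℝ) * r ^ k) := by
    rw [hterm_eq]
    exact Summable.tsum_le_tsum hbound (hterm_eq ▸ hsummable) hmaj
  have hmaj_val : ∑' k : ℕ, u ^ 2 * ((k : ℝ) * r ^ k) = u ^ 2 * (r / (1 - r) ^ 2) := by
    rw [tsum_mul_left, tsum_coe_mul_geometric_of_norm_lt_one hrnorm]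
  have hfinal : u ^ 2 * (r / (1 - r) ^ 2) ≤ 1 := by
    have h1r : 0 < 1 - r := by linarith
    rw [mul_div_assoc' , div_le_one (by positivity)]
    have h1ra : 1 - r = u * (u + 2) * a ^ 2 := by nlinarith [haa]
    rw [h1ra, hr_def]
    have h2 : (u + 2) * a = 1 + a := by nlinarith [haa]
    have h3 : u * (u + 2) * a ^ 2 = u * a * (1 + a) := by
      rw [← h2]; ring
    rw [h3]
    have h4 : (u * a * (1 + a)) ^ 2 = (u * a) ^ 2 * (1 + a) ^ 2 := by ring
    rw [h4]
    nlinarith [sq_nonneg (u * a), ha0, mul_pos hu ha0]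
  linarith [htsum_le, hmaj_val.le, hmaj_val.ge, hfinal]
end

section
/- Let 0 = τ₀ < τ₁ < … < τ_M = 1 be the merged partition generated by the uniform grids t_{ℓ,i} = ℓ/n_i, and for j ∈ ℕ_{≥1}^d let Γ_j(t) = ∏_{ν=1}^M 1/(1 + μ_j·(t∧τ_ν − t∧τ_{ν−1})). Then for every i ∈ I, every j ∈ ℕ_{≥1}^d, all ℓ, k ∈ {0,…,n_i−1} with k ≥ ℓ, and every t ∈ [t_{k,i}, t_{k+1,i}], one has Γ_j(t)/Γ_j(t_{ℓ,i}) ≤ (1 + μ_j/n_i)^{−(k−ℓ)} · 1/(1 + μ_j·(t − t_{k,i})). -/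
open Real MeasureTheory Finset

/-- Rewrite `Gam` as a product over `range M`. -/
lemma gam_eq_range (μ : ℝ) (M : ℕ) (τ : ℕ → ℝ) (t : ℝ) :
    Gam μ M τ t
      = ∏ ν ∈ Finset.range M, 1 / (1 + μ * (min t (τ (ν + 1)) - min t (τ ν))) := by
  rw [Gam, ← Finset.Ico_add_one_right_eq_Icc, Finset.prod_Ico_eq_prod_range]
  simp [Nat.add_sub_cancel, add_comm 1]

lemma one_add_sum_le_prod'_s5 (s : Finset ℕ) (f : ℕ → ℝ) (hf : ∀ x ∈ s, 0 ≤ f x) :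
    1 + ∑ x ∈ s, f x ≤ ∏ x ∈ s, (1 + f x) := by
  induction s using Finset.cons_induction with
  | empty => simp
  | cons a s ha ih =>
    rw [Finset.sum_cons, Finset.prod_cons]
    have h1 : 0 ≤ f a := hf a (Finset.mem_cons_self a s)
    have h2 : 0 ≤ ∑ x ∈ s, f x :=
      Finset.sum_nonneg fun x hx => hf x (Finset.mem_cons.2 (Or.inr hx))
    have h3 := ih fun x hx => hf x (Finset.mem_cons.2 (Or.inr hx))
    nlinarith

lemma tau_mono {M : ℕ} {τ : ℕ → ℝ} (hmono : ∀ ν < M, τ ν ≤ τ (ν + 1)) :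
    ∀ p q : ℕ, p ≤ q → q ≤ M → τ p ≤ τ q := by
  intro p q hpq hqM
  induction q, hpq using Nat.le_induction with
  | base => exact le_rfl
  | succ q hq ih =>
    exact (ih (by omega)).trans (hmono q (by omega))

lemma gam_pos (μ : ℝ) (hμ : 0 ≤ μ) (M : ℕ) (τ : ℕ → ℝ)
    (hmono : ∀ ν < M, τ ν ≤ τ (ν + 1)) (t : ℝ) :
    0 < Gam μ M τ t := by
  rw [gam_eq_range]
  refine Finset.prod_pos fun ν hν => ?_
  have h : τ ν ≤ τ (ν + 1) := hmono ν (Finset.mem_range.1 hν)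
  have hmm : min t (τ ν) ≤ min t (τ (ν + 1)) := min_le_min le_rfl h
  have hden : (0:ℝ) < 1 + μ * (min t (τ (ν + 1)) - min t (τ ν)) := by nlinarith
  positivity

/-- Key one-step bound starting from a partition point:
`Γ(t) ≤ Γ(τ ν₀) / (1 + μ (t - τ ν₀))` for `τ ν₀ ≤ t ≤ 1`. -/
lemma gam_step (μ : ℝ) (hμ : 0 ≤ μ) (M : ℕ) (τ : ℕ → ℝ)
    (hτ0 : τ 0 = 0) (hτM : τ M = 1)
    (hmono : ∀ ν < M, τ ν ≤ τ (ν + 1))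
    (ν0 : ℕ) (hν0 : ν0 ≤ M) (t : ℝ) (hst : τ ν0 ≤ t) (ht : t ≤ 1) :
    Gam μ M τ t ≤ Gam μ M τ (τ ν0) * (1 / (1 + μ * (t - τ ν0))) := by
  have hmono' := tau_mono hmono
  set s := τ ν0 with hsdef
  have hs0 : 0 ≤ s := by
    have := hmono' 0 ν0 (Nat.zero_le _) hν0
    rw [hτ0] at this; exact this
  set ft : ℕ → ℝ := fun ν => 1 / (1 + μ * (min t (τ (ν + 1)) - min t (τ ν))) with hft
  set fs : ℕ → ℝ := fun ν => 1 / (1 + μ * (min s (τ (ν + 1)) - min s (τ ν))) with hfs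
  -- on `range ν0` the factors agree
  have hagree : ∀ ν ∈ Finset.range ν0, fs ν = ft ν := by
    intro ν hν
    have hν' : ν < ν0 := Finset.mem_range.1 hν
    have h1 : τ ν ≤ s := hmono' ν ν0 hν'.le hν0
    have h2 : τ (ν + 1) ≤ s := hmono' (ν + 1) ν0 hν' hν0
    simp only [hfs, hft, min_eq_right h1, min_eq_right h2,
      min_eq_right (h1.trans hst), min_eq_right (h2.trans hst)]
  -- on `Ico ν0 M` the `s`-factors are trivial
  have htriv : ∀ ν ∈ Finset.Ico ν0 M, fs ν = 1 := by
    intro ν hν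
    obtain ⟨h1, h2⟩ := Finset.mem_Ico.1 hν
    have ha : s ≤ τ ν := hmono' ν0 ν h1 h2.le
    have hb : s ≤ τ (ν + 1) := hmono' ν0 (ν + 1) (by omega) h2
    simp [hfs, min_eq_left ha, min_eq_left hb]
  have hsplit_s : Gam μ M τ s = ∏ ν ∈ Finset.range ν0, ft ν := by
    rw [gam_eq_range, ← Finset.prod_range_mul_prod_Ico _ hν0,
      Finset.prod_congr rfl htriv, Finset.prod_const_one, mul_one,
      Finset.prod_congr rfl hagree]
  have hsplit_t : Gam μ M τ t
      = Gam μ M τ s * ∏ ν ∈ Finset.Ico ν0 M, ft ν := by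
    rw [gam_eq_range, ← Finset.prod_range_mul_prod_Ico _ hν0, hsplit_s]
  rw [hsplit_t]
  have hbnon : ∀ ν ∈ Finset.Ico ν0 M,
      0 ≤ μ * (min t (τ (ν + 1)) - min t (τ ν)) := by
    intro ν hν
    obtain ⟨_, h2⟩ := Finset.mem_Ico.1 hν
    have := min_le_min (le_refl t) (hmono ν h2)
    have h0 : 0 ≤ min t (τ (ν + 1)) - min t (τ ν) := by linarith
    positivity
  have hsum : ∑ ν ∈ Finset.Ico ν0 M, (μ * (min t (τ (ν + 1)) - min t (τ ν)))
      = μ * (t - s) := by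
    rw [← Finset.mul_sum, Finset.sum_Ico_eq_sub _ hν0,
      Finset.sum_range_sub (fun ν => min t (τ ν)),
      Finset.sum_range_sub (fun ν => min t (τ ν)), hτ0, hτM,
      min_eq_left ht, min_eq_right (hs0.trans hst), ← hsdef, min_eq_right hst]
    ring
  have hprod : 1 + μ * (t - s)
      ≤ ∏ ν ∈ Finset.Ico ν0 M, (1 + μ * (min t (τ (ν + 1)) - min t (τ ν))) := by
    rw [← hsum]; exact one_add_sum_le_prod'_s5 _ _ hbnon
  have hpos : (0:ℝ) < 1 + μ * (t - s) := by nlinarith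
  have htail : ∏ ν ∈ Finset.Ico ν0 M, ft ν ≤ 1 / (1 + μ * (t - s)) := by
    have : ∏ ν ∈ Finset.Ico ν0 M, ft ν
        = 1 / ∏ ν ∈ Finset.Ico ν0 M, (1 + μ * (min t (τ (ν + 1)) - min t (τ ν))) := by
      rw [hft, Finset.prod_div_distrib, Finset.prod_const_one]
    rw [this]
    exact one_div_le_one_div_of_le hpos hprod
  exact mul_le_mul_of_nonneg_left htail (gam_pos μ hμ M τ hmono s).le

/-- Geometric decay along grid points. -/
lemma gam_grid (μ : ℝ) (hμ : 0 ≤ μ) (M : ℕ) (τ : ℕ → ℝ)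
    (hτ0 : τ 0 = 0) (hτM : τ M = 1)
    (hmono : ∀ ν < M, τ ν ≤ τ (ν + 1))
    (N : ℕ) (hN : 0 < N)
    (hgrid : ∀ m : ℕ, m ≤ N → ∃ ν0 ≤ M, τ ν0 = (m : ℝ) / (N : ℝ))
    (ℓ k : ℕ) (hℓk : ℓ ≤ k) (hk : k ≤ N) :
    Gam μ M τ ((k : ℝ) / (N : ℝ))
      ≤ Gam μ M τ ((ℓ : ℝ) / (N : ℝ)) * (1 / (1 + μ / (N : ℝ))) ^ (k - ℓ) := by
  induction k, hℓk using Nat.le_induction with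
  | base => simp
  | succ k hℓk ih =>
    have hkN : k ≤ N := by omega
    obtain ⟨ν0, hν0, he⟩ := hgrid k hkN
    have hNR : (0:ℝ) < (N : ℝ) := by exact_mod_cast hN
    have hstep := gam_step μ hμ M τ hτ0 hτM hmono ν0 hν0 (((k:ℝ)+1) / (N:ℝ))
      (by rw [he]; exact (div_le_div_iff_of_pos_right hNR).mpr (by linarith))
      (by rw [div_le_one hNR]; exact_mod_cast hk)
    rw [he] at hstep
    have harith : ((k:ℝ)+1) / (N:ℝ) - (k:ℝ) / (N:ℝ) = 1 / (N:ℝ) := by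
      field_simp
      ring
    rw [harith] at hstep
    have hcast : (((k + 1 : ℕ)) : ℝ) = (k : ℝ) + 1 := by push_cast; ring
    rw [hcast]
    have hfac : (0:ℝ) ≤ 1 / (1 + μ / (N:ℝ)) := by positivity
    calc Gam μ M τ (((k:ℝ)+1) / (N:ℝ))
        ≤ Gam μ M τ ((k:ℝ) / (N:ℝ)) * (1 / (1 + μ * (1 / (N:ℝ)))) := hstep
      _ ≤ (Gam μ M τ ((ℓ : ℝ) / (N : ℝ)) * (1 / (1 + μ / (N : ℝ))) ^ (k - ℓ))
            * (1 / (1 + μ * (1 / (N:ℝ)))) := by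
          apply mul_le_mul_of_nonneg_right (ih hkN)
          positivity
      _ = Gam μ M τ ((ℓ : ℝ) / (N : ℝ)) * (1 / (1 + μ / (N : ℝ))) ^ (k + 1 - ℓ) := by
          rw [Nat.succ_sub hℓk, pow_succ]; ring

theorem gam_ratio_product_bound
    (d : ℕ) (hd : 1 ≤ d)
    (I : Finset (Fin d → ℕ+)) (hI : I.Nonempty)
    (n : (Fin d → ℕ+) → ℕ+)
    (M : ℕ) (τ : ℕ → ℝ)
    (hτ : IsMergedPartition I n M τ)
    (i : Fin d → ℕ+) (hi : i ∈ I) (j : Fin d → ℕ+)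
    (ℓ k : ℕ) (hℓk : ℓ ≤ k) (hk : k < (n i : ℕ))
    (t : ℝ) (ht1 : (k : ℝ) / ((n i : ℕ) : ℝ) ≤ t)
    (ht2 : t ≤ ((k : ℝ) + 1) / ((n i : ℕ) : ℝ)) :
    Gam (eig j) M τ t / Gam (eig j) M τ ((ℓ : ℝ) / ((n i : ℕ) : ℝ))
      ≤ 1 / (1 + eig j / ((n i : ℕ) : ℝ)) ^ (k - ℓ)
        * (1 / (1 + eig j * (t - (k : ℝ) / ((n i : ℕ) : ℝ)))) := by
  obtain ⟨hτ0, hτM, hstrict, hset⟩ := hτ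
  have hmono : ∀ ν < M, τ ν ≤ τ (ν + 1) := fun ν hν => (hstrict ν hν).le
  set μ := eig j with hμdef
  have hμ : 0 ≤ μ := by
    rw [hμdef, eig]
    positivity
  set N : ℕ := (n i : ℕ) with hNdef
  have hN : 0 < N := (n i).pos
  have hNR : (0:ℝ) < (N : ℝ) := by exact_mod_cast hN
  have hgrid : ∀ m : ℕ, m ≤ N → ∃ ν0 ≤ M, τ ν0 = (m : ℝ) / (N : ℝ) := by
    intro m hm
    have hmem : ((m : ℝ) / (N : ℝ)) ∈
        {x : ℝ | ∃ i ∈ I, ∃ ℓ : ℕ, ℓ ≤ (n i : ℕ) ∧ x = (ℓ : ℝ) / ((n i : ℕ) : ℝ)} :=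
      ⟨i, hi, m, hm, rfl⟩
    rw [← hset] at hmem
    obtain ⟨ν0, hν0, he⟩ := hmem
    exact ⟨ν0, hν0, he⟩
  have hk1 : k + 1 ≤ N := hk
  have ht01 : t ≤ 1 := by
    refine ht2.trans ?_
    rw [div_le_one hNR]
    exact_mod_cast hk1
  -- geometric part up to k/N
  have hgeo := gam_grid μ hμ M τ hτ0 hτM hmono N hN hgrid ℓ k hℓk hk.le
  -- last step from k/N to t
  obtain ⟨ν0, hν0, he⟩ := hgrid k hk.le
  have hstep := gam_step μ hμ M τ hτ0 hτM hmono ν0 hν0 t (he ▸ ht1) ht01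
  rw [he] at hstep
  have hposlast : (0:ℝ) < 1 + μ * (t - (k : ℝ) / (N : ℝ)) := by nlinarith
  have hGl : 0 < Gam μ M τ ((ℓ : ℝ) / (N : ℝ)) := gam_pos μ hμ M τ hmono _
  rw [div_le_iff₀ hGl]
  have hchain : Gam μ M τ t
      ≤ Gam μ M τ ((ℓ : ℝ) / (N : ℝ)) * (1 / (1 + μ / (N : ℝ))) ^ (k - ℓ)
          * (1 / (1 + μ * (t - (k : ℝ) / (N : ℝ)))) := by
    refine hstep.trans ?_
    exact mul_le_mul_of_nonneg_right hgeo (by positivity)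
  refine hchain.trans_eq ?_
  rw [one_div_pow]
  ring
end

section
/- Let d ≥ 1 be an integer and set λ_i = |i|₂^{−2d} and μ_i = π²|i|₂² for i ∈ ℕ_{≥1}^d. For I > 0 and a family n = (n_i) of positive integers indexed by {i ∈ ℕ_{≥1}^d : |i|₂ ≤ I}, define D(I,n) = ∑_{|i|₂≤I} λ_i/n_i + ∑_{|i|₂>I} λ_i/μ_i. Then there exist constants c, C > 0 such that for every integer N ≥ 2: c·N^{−1}·(ln N)² ≤ inf{ D(I,n) : I > 0, n with ∑_{|i|₂≤I} n_i ≤ N } ≤ C·N^{−1}·(ln N)². Moreover the choice I_N = N^{1/(d+2)} and n_{i,N} = ⌈|i|₂^{−d}·N/ln N⌉ attains this infimum up to a constant factor: D(I_N, n_N) ≤ C·N^{−1}·(ln N)². -/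
open Real Finset

/-- The Euclidean norm `|i|₂` of a multi-index `i ∈ ℕ_{≥1}^d`. -/
noncomputable def multiNorm {d : ℕ} (i : Fin d → ℕ+) : ℝ :=
  Real.sqrt (∑ ℓ : Fin d, ((i ℓ : ℕ) : ℝ) ^ 2)

/-- The lattice sum `∑_{i ∈ ℕ_{≥1}^d, |i|₂ ≤ I} |i|₂^{-β}` (a finite sum). -/
noncomputable def ballSum (d : ℕ) (β : ℝ) (I : ℝ) : ℝ :=
  ∑ᶠ i ∈ {i : Fin d → ℕ+ | multiNorm i ≤ I}, multiNorm i ^ (-β)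

/-- The tail lattice sum `∑_{i ∈ ℕ_{≥1}^d, |i|₂ > I} |i|₂^{-β}`. -/
noncomputable def tailSum (d : ℕ) (β : ℝ) (I : ℝ) : ℝ :=
  ∑' i : Fin d → ℕ+, if I < multiNorm i then multiNorm i ^ (-β) else 0

/-- The discretization error functional `D(I,n)` for nonuniform time steps `1/n_i`
and spectral cutoff at radius `I`, in the critical case `λ_i = |i|₂^{-2d}`,
`μ_i = π²|i|₂²`. -/
noncomputable def nonuniErr (d : ℕ) (I : ℝ) (n : (Fin d → ℕ+) → ℕ) : ℝ :=
  (∑ᶠ i ∈ {i : Fin d → ℕ+ | multiNorm i ≤ I},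
      multiNorm i ^ (-(2 * (d : ℝ))) / (n i : ℝ)) +
    ∑' i : Fin d → ℕ+,
      if I < multiNorm i then
        multiNorm i ^ (-(2 * (d : ℝ))) / (π ^ 2 * multiNorm i ^ 2)
      else 0


namespace MN

variable {d : ℕ}

lemma mn_nonneg (i : Fin d → ℕ+) : 0 ≤ multiNorm i := Real.sqrt_nonneg _

lemma coord_le_mn (i : Fin d → ℕ+) (ℓ : Fin d) : ((i ℓ : ℕ) : ℝ) ≤ multiNorm i := by
  have h1 : ((i ℓ : ℕ) : ℝ) ^ 2 ≤ ∑ ℓ' : Fin d, ((i ℓ' : ℕ) : ℝ) ^ 2 := by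
    apply Finset.single_le_sum (f := fun ℓ' => ((i ℓ' : ℕ) : ℝ) ^ 2)
    · intro j _; positivity
    · exact Finset.mem_univ ℓ
  calc ((i ℓ : ℕ) : ℝ) = Real.sqrt (((i ℓ : ℕ) : ℝ) ^ 2) := by
        rw [Real.sqrt_sq (by positivity)]
    _ ≤ multiNorm i := Real.sqrt_le_sqrt h1

lemma one_le_mn (hd : 1 ≤ d) (i : Fin d → ℕ+) : 1 ≤ multiNorm i := by
  have ℓ : Fin d := ⟨0, hd⟩
  have := coord_le_mn i ℓ
  have h1 : (1 : ℝ) ≤ ((i ℓ : ℕ) : ℝ) := by exact_mod_cast (i ℓ).one_le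
  linarith

lemma mn_pos (hd : 1 ≤ d) (i : Fin d → ℕ+) : 0 < multiNorm i :=
  lt_of_lt_of_le one_pos (one_le_mn hd i)

lemma mn_le_of_coord_le (i : Fin d → ℕ+) (k : ℕ) (h : ∀ ℓ, (i ℓ : ℕ) ≤ k) :
    multiNorm i ≤ Real.sqrt d * k := by
  have h1 : ∑ ℓ : Fin d, ((i ℓ : ℕ) : ℝ) ^ 2 ≤ ∑ _ℓ : Fin d, (k : ℝ) ^ 2 := by
    apply Finset.sum_le_sum
    intro ℓ _
    have : ((i ℓ : ℕ) : ℝ) ≤ (k : ℝ) := by exact_mod_cast h ℓ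
    have h0 : (0:ℝ) ≤ ((i ℓ : ℕ) : ℝ) := by positivity
    nlinarith
  calc multiNorm i ≤ Real.sqrt (∑ _ℓ : Fin d, (k : ℝ) ^ 2) := Real.sqrt_le_sqrt h1
    _ = Real.sqrt ((d : ℝ) * (k : ℝ) ^ 2) := by rw [Finset.sum_const]; simp [mul_comm]
    _ = Real.sqrt d * k := by
        rw [Real.sqrt_mul (by positivity), Real.sqrt_sq (by positivity)]

/-- the sup of the coordinates, as a natural number -/
def supc (i : Fin d → ℕ+) : ℕ := Finset.univ.sup (fun ℓ => (i ℓ : ℕ))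

lemma coord_le_supc (i : Fin d → ℕ+) (ℓ : Fin d) : (i ℓ : ℕ) ≤ supc i :=
  Finset.le_sup (f := fun ℓ => (i ℓ : ℕ)) (Finset.mem_univ ℓ)

lemma exists_supc (hd : 1 ≤ d) (i : Fin d → ℕ+) : ∃ ℓ, (i ℓ : ℕ) = supc i := by
  obtain ⟨ℓ, _, h⟩ := Finset.exists_mem_eq_sup (Finset.univ : Finset (Fin d))
    ⟨⟨0, hd⟩, Finset.mem_univ _⟩ (fun ℓ => (i ℓ : ℕ))
  exact ⟨ℓ, h.symm⟩

lemma supc_le_mn (hd : 1 ≤ d) (i : Fin d → ℕ+) : ((supc i : ℕ) : ℝ) ≤ multiNorm i := by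
  obtain ⟨ℓ, h⟩ := exists_supc hd i
  rw [← h]; exact coord_le_mn i ℓ

lemma mn_le_supc (i : Fin d → ℕ+) : multiNorm i ≤ Real.sqrt d * supc i :=
  mn_le_of_coord_le i _ (coord_le_supc i)

lemma one_le_supc (hd : 1 ≤ d) (i : Fin d → ℕ+) : 1 ≤ supc i := by
  have := coord_le_supc i ⟨0, hd⟩
  exact le_trans (i ⟨0, hd⟩).one_le this

lemma prod_le_mn_pow (i : Fin d → ℕ+) : ∏ ℓ : Fin d, ((i ℓ : ℕ) : ℝ) ≤ multiNorm i ^ d := by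
  calc ∏ ℓ : Fin d, ((i ℓ : ℕ) : ℝ) ≤ ∏ _ℓ : Fin d, multiNorm i := by
        apply Finset.prod_le_prod
        · intro ℓ _; positivity
        · intro ℓ _; exact coord_le_mn i ℓ
    _ = multiNorm i ^ d := by rw [Finset.prod_const]; simp


/-- the ball as a Finset -/
noncomputable def ballF (d : ℕ) (I : ℝ) : Finset (Fin d → ℕ+) :=
  (Fintype.piFinset fun _ : Fin d => Finset.Icc (1 : ℕ+) (⟨⌊I⌋₊ + 1, Nat.succ_pos _⟩ : ℕ+)).filter
    (fun i => multiNorm i ≤ I)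

lemma mem_ballF {I : ℝ} {i : Fin d → ℕ+} : i ∈ ballF d I ↔ multiNorm i ≤ I := by
  constructor
  · intro h; exact (Finset.mem_filter.1 h).2
  · intro h
    refine Finset.mem_filter.2 ⟨?_, h⟩
    refine Fintype.mem_piFinset.2 fun ℓ => ?_
    refine Finset.mem_Icc.2 ⟨(i ℓ).one_le, ?_⟩
    have h1 : ((i ℓ : ℕ) : ℝ) ≤ I := le_trans (coord_le_mn i ℓ) h
    have h2 : (i ℓ : ℕ) ≤ ⌊I⌋₊ := Nat.le_floor h1
    have : (i ℓ : ℕ) ≤ ⌊I⌋₊ + 1 := Nat.le_succ_of_le h2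
    exact_mod_cast this

lemma ball_eq_coe (I : ℝ) : {i : Fin d → ℕ+ | multiNorm i ≤ I} = ↑(ballF d I) := by
  ext i; simp [mem_ballF]

lemma finsum_ball {M : Type*} [AddCommMonoid M] (I : ℝ) (f : (Fin d → ℕ+) → M) :
    (∑ᶠ i ∈ {i : Fin d → ℕ+ | multiNorm i ≤ I}, f i) = ∑ i ∈ ballF d I, f i := by
  rw [ball_eq_coe, finsum_mem_coe_finset]

/-- summability of the product majorant -/
lemma summable_prod_inv_sq (d : ℕ) :
    Summable (fun i : Fin d → ℕ+ => ∏ ℓ : Fin d, (((i ℓ : ℕ) : ℝ) ^ 2)⁻¹) := by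
  induction d with
  | zero => exact summable_of_finite_support (Set.toFinite _)
  | succ m ih =>
      have hb : Summable (fun n : ℕ+ => (((n : ℕ) : ℝ) ^ 2)⁻¹) := by
        have := Real.summable_nat_pow_inv.2 (by norm_num : 2 ≤ 2)
        exact this.subtype _
      have hs := hb.mul_of_nonneg ih (fun n => by positivity) (fun j => by positivity)
      have := hs.comp_injective (Fin.consEquiv fun _ => ℕ+).symm.injective
      refine this.congr ?_
      intro i
      simp only [Function.comp, Fin.consEquiv_symm_apply]
      rw [Fin.prod_univ_succ]
      rfl


lemma summable_mn (hd : 1 ≤ d) :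
    Summable (fun i : Fin d → ℕ+ => (multiNorm i ^ (2 * d + 2))⁻¹) := by
  refine (summable_prod_inv_sq d).of_nonneg_of_le (fun i => inv_nonneg.2 (pow_nonneg (mn_nonneg i) _)) (fun i => ?_)
  have h1 : (1:ℝ) ≤ multiNorm i := one_le_mn hd i
  have h2 : ∏ ℓ : Fin d, ((i ℓ : ℕ) : ℝ) ≤ multiNorm i ^ d := prod_le_mn_pow i
  have hp : (0:ℝ) < ∏ ℓ : Fin d, ((i ℓ : ℕ) : ℝ) := by
    apply Finset.prod_pos; intro ℓ _; exact_mod_cast (i ℓ).pos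
  have key : ∏ ℓ : Fin d, (((i ℓ : ℕ) : ℝ) ^ 2) ≤ multiNorm i ^ (2 * d + 2) := by
    have e1 : ∏ ℓ : Fin d, (((i ℓ : ℕ) : ℝ) ^ 2) = (∏ ℓ : Fin d, ((i ℓ : ℕ) : ℝ)) ^ 2 := by
      rw [Finset.prod_pow]
    rw [e1]
    calc (∏ ℓ : Fin d, ((i ℓ : ℕ) : ℝ)) ^ 2 ≤ (multiNorm i ^ d) ^ 2 := by nlinarith
      _ = multiNorm i ^ (2 * d) := by ring
      _ ≤ multiNorm i ^ (2 * d + 2) := by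
          apply pow_le_pow_right₀ h1; omega
  have hP : (0:ℝ) < ∏ ℓ : Fin d, (((i ℓ : ℕ) : ℝ) ^ 2) := by
    apply Finset.prod_pos; intro ℓ _; positivity
  calc (multiNorm i ^ (2 * d + 2))⁻¹ ≤ (∏ ℓ : Fin d, (((i ℓ : ℕ) : ℝ) ^ 2))⁻¹ :=
        inv_anti₀ hP key
    _ = ∏ ℓ : Fin d, (((i ℓ : ℕ) : ℝ) ^ 2)⁻¹ := by rw [Finset.prod_inv_distrib]

/-- the fiber card bound: i's with all coordinates ≤ k and sup = k -/
lemma card_fiber_le (hd : 1 ≤ d) (k : ℕ+) (s : Finset (Fin d → ℕ+))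
    (hs : ∀ i ∈ s, Finset.univ.sup (fun ℓ => (i ℓ : ℕ)) = (k : ℕ)) :
    s.card ≤ d * (k : ℕ) ^ (d - 1) := by
  classical
  set F : Finset (Fin d → ℕ+) :=
    (Finset.univ : Finset (Fin d)).biUnion
      (fun ℓ₀ => Fintype.piFinset (fun ℓ => if ℓ = ℓ₀ then {k} else Finset.Icc 1 k)) with hF
  have hsub : s ⊆ F := by
    intro i hi
    have hsup := hs i hi
    obtain ⟨ℓ₀, _, hℓ₀⟩ := Finset.exists_mem_eq_sup (Finset.univ : Finset (Fin d))
      ⟨⟨0, hd⟩, Finset.mem_univ _⟩ (fun ℓ => (i ℓ : ℕ))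
    refine Finset.mem_biUnion.2 ⟨ℓ₀, Finset.mem_univ _, ?_⟩
    refine Fintype.mem_piFinset.2 fun ℓ => ?_
    by_cases h : ℓ = ℓ₀
    · simp only [h, if_pos rfl, Finset.mem_singleton]
      have : (i ℓ₀ : ℕ) = (k : ℕ) := by rw [← hℓ₀, hsup]
      simpa using PNat.coe_injective this
    · simp only [if_neg h, Finset.mem_Icc]
      refine ⟨(i ℓ).one_le, ?_⟩
      have h1 : (i ℓ : ℕ) ≤ (k : ℕ) := by
        rw [← hsup]; exact Finset.le_sup (f := fun ℓ => (i ℓ : ℕ)) (Finset.mem_univ ℓ)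
      exact_mod_cast h1
  calc s.card ≤ F.card := Finset.card_le_card hsub
    _ ≤ ∑ ℓ₀ : Fin d, (Fintype.piFinset (fun ℓ => if ℓ = ℓ₀ then ({k} : Finset ℕ+)
          else Finset.Icc 1 k)).card := Finset.card_biUnion_le
    _ ≤ ∑ _ℓ₀ : Fin d, (k:ℕ) ^ (d - 1) := by
        apply Finset.sum_le_sum
        intro ℓ₀ _
        rw [Fintype.card_piFinset]
        calc ∏ ℓ : Fin d, (if ℓ = ℓ₀ then ({k} : Finset ℕ+) else Finset.Icc 1 k).card
            = ∏ ℓ ∈ Finset.univ.erase ℓ₀,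
                (if ℓ = ℓ₀ then ({k} : Finset ℕ+) else Finset.Icc 1 k).card := by
              rw [← Finset.mul_prod_erase Finset.univ _ (Finset.mem_univ ℓ₀)]
              simp
          _ ≤ ∏ _ℓ ∈ Finset.univ.erase ℓ₀, (k:ℕ) := by
              apply Finset.prod_le_prod (fun _ _ => Nat.zero_le _)
              intro ℓ hℓ
              rw [if_neg (Finset.ne_of_mem_erase hℓ)]
              rw [PNat.card_Icc]
              simp
          _ = (k:ℕ) ^ (d - 1) := by
              rw [Finset.prod_const, Finset.card_erase_of_mem (Finset.mem_univ _)]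
              simp
    _ = d * (k:ℕ) ^ (d-1) := by simp [Finset.sum_const, mul_comm]


lemma tele (f : ℕ → ℝ) (a : ℕ) : ∀ b : ℕ, a ≤ b →
    ∑ k ∈ Finset.Ioc a b, (f (k - 1) - f k) = f a - f b := by
  intro b
  induction b with
  | zero => intro h; interval_cases a; simp
  | succ m ih =>
      intro h
      rcases Nat.lt_or_ge a (m+1) with h1 | h2
      · have ham : a ≤ m := Nat.lt_succ_iff.1 h1
        rw [Finset.sum_Ioc_succ_top ham, ih ham]
        simp
      · have : a = m + 1 := le_antisymm h h2
        subst this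
        simp

lemma bern_step (p k : ℕ) (hp : 1 ≤ p) (hk : 2 ≤ k) :
    (p : ℝ) * (((k:ℝ)) ^ (p+1))⁻¹ ≤ (((k-1 : ℕ):ℝ) ^ p)⁻¹ - ((k:ℝ) ^ p)⁻¹ := by
  have hx : (2:ℝ) ≤ (k:ℝ) := by exact_mod_cast hk
  have hc : ((k-1 : ℕ):ℝ) = (k:ℝ) - 1 := by
    push_cast [show (1:ℕ) ≤ k by omega]; ring
  rw [hc]
  have hpos : (0:ℝ) < (k:ℝ) - 1 := by linarith
  have hkpos : (0:ℝ) < (k:ℝ) := by linarith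
  have hb : 1 + (p:ℝ) * (1/((k:ℝ)-1)) ≤ (1 + 1/((k:ℝ)-1)) ^ p := by
    apply one_add_mul_le_pow
    have : (0:ℝ) < 1/((k:ℝ)-1) := by positivity
    linarith
  have he : 1 + 1/((k:ℝ)-1) = (k:ℝ)/((k:ℝ)-1) := by field_simp; ring
  have hb2 : 1 + (p:ℝ)/(k:ℝ) ≤ ((k:ℝ))^p / (((k:ℝ)-1)) ^ p := by
    rw [← div_pow, ← he]
    refine le_trans ?_ hb
    have : (p:ℝ)/(k:ℝ) ≤ (p:ℝ) * (1/((k:ℝ)-1)) := by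
      rw [mul_one_div]
      apply div_le_div_of_nonneg_left (by positivity) hpos
      linarith
    linarith
  have hxp : (0:ℝ) < (k:ℝ)^p := by positivity
  have hxp1 : (0:ℝ) < ((k:ℝ)-1)^p := by positivity
  have h4 : (1 + (p:ℝ)/(k:ℝ)) * ((k:ℝ)-1)^p ≤ (k:ℝ)^p :=
    (le_div_iff₀ hxp1).1 hb2
  rw [← sub_nonneg]
  have e1 : (((k:ℝ)-1) ^ p)⁻¹ - ((k:ℝ) ^ p)⁻¹ - (p:ℝ) * (((k:ℝ)) ^ (p+1))⁻¹
      = ((k:ℝ)^p - (1 + (p:ℝ)/(k:ℝ)) * ((k:ℝ)-1)^p) / ((k:ℝ)^p * ((k:ℝ)-1)^p) := by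
    rw [pow_succ]
    field_simp
    ring
  rw [e1]
  exact div_nonneg (by linarith) (by positivity)

lemma sum_tail_aux (p a : ℕ) (hp : 1 ≤ p) (ha : 1 ≤ a) (t : Finset ℕ)
    (hta : ∀ k ∈ t, a < k) :
    ∑ k ∈ t, (((k:ℝ)) ^ (p+1))⁻¹ ≤ (((a:ℕ):ℝ) ^ p)⁻¹ := by
  have ppos : (0:ℝ) < (p:ℝ) := by exact_mod_cast hp
  by_cases hte : t.Nonempty
  · set B := t.max' hte with hB
    have hsub : t ⊆ Finset.Ioc a B := by
      intro k hk
      exact Finset.mem_Ioc.2 ⟨hta k hk, Finset.le_max' t k hk⟩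
    have hab : a ≤ B := le_of_lt (hta B (t.max'_mem hte))
    have h1 : ∑ k ∈ t, (((k:ℝ)) ^ (p+1))⁻¹ ≤ ∑ k ∈ Finset.Ioc a B, (((k:ℝ)) ^ (p+1))⁻¹ :=
      Finset.sum_le_sum_of_subset_of_nonneg hsub (fun k _ _ => by positivity)
    have h2 : ∑ k ∈ Finset.Ioc a B, (p:ℝ) * (((k:ℝ)) ^ (p+1))⁻¹ ≤
        ((a:ℝ) ^ p)⁻¹ - ((B:ℝ) ^ p)⁻¹ := by
      have e := tele (fun k => (((k:ℕ):ℝ) ^ p)⁻¹) a B hab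
      rw [← e]
      apply Finset.sum_le_sum
      intro k hk
      have hk2 : 2 ≤ k := by
        have := (Finset.mem_Ioc.1 hk).1; omega
      exact bern_step p k hp hk2
    have hBp : (0:ℝ) ≤ ((B:ℝ)^p)⁻¹ := by positivity
    rw [← Finset.mul_sum] at h2
    have h4 : ∑ k ∈ Finset.Ioc a B, (((k:ℝ)) ^ (p+1))⁻¹ ≤ ((a:ℝ)^p)⁻¹ / (p:ℝ) := by
      rw [le_div_iff₀ ppos]
      calc (∑ k ∈ Finset.Ioc a B, (((k:ℝ)) ^ (p+1))⁻¹) * (p:ℝ)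
          = (p:ℝ) * ∑ k ∈ Finset.Ioc a B, (((k:ℝ)) ^ (p+1))⁻¹ := by ring
        _ ≤ ((a:ℝ)^p)⁻¹ - ((B:ℝ)^p)⁻¹ := h2
        _ ≤ ((a:ℝ)^p)⁻¹ := by linarith
    have h5 : ((a:ℝ)^p)⁻¹ / (p:ℝ) ≤ ((a:ℝ)^p)⁻¹ := by
      apply div_le_self (by positivity)
      exact_mod_cast hp
    linarith
  · rw [Finset.not_nonempty_iff_eq_empty.1 hte]
    simp only [Finset.sum_empty]
    positivity

lemma sum_inv_pow_tail (p K₀ : ℕ) (hp : 1 ≤ p) (t : Finset ℕ) (ht : ∀ k ∈ t, K₀ < k) :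
    ∑ k ∈ t, (((k:ℝ)) ^ (p+1))⁻¹ ≤ 2 * (((max K₀ 1 : ℕ):ℝ) ^ p)⁻¹ := by
  rcases Nat.eq_zero_or_pos K₀ with h0 | hpos
  · subst h0
    have hsplit : t ⊆ insert 1 (t.filter (1 < ·)) := by
      intro k hk
      rcases Nat.lt_or_ge 1 k with h | h
      · exact Finset.mem_insert.2 (Or.inr (Finset.mem_filter.2 ⟨hk, h⟩))
      · have : k = 1 := by have := ht k hk; omega
        simp [this]
    have h1 : ∑ k ∈ t, (((k:ℝ)) ^ (p+1))⁻¹ ≤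
        ∑ k ∈ insert 1 (t.filter (1 < ·)), (((k:ℝ)) ^ (p+1))⁻¹ :=
      Finset.sum_le_sum_of_subset_of_nonneg hsplit (fun k _ _ => by positivity)
    have h2 : ∑ k ∈ (t.filter (1 < ·)), (((k:ℝ)) ^ (p+1))⁻¹ ≤ (((1:ℕ):ℝ)^p)⁻¹ :=
      sum_tail_aux p 1 hp le_rfl _ (fun k hk => (Finset.mem_filter.1 hk).2)
    rw [Finset.sum_insert (by simp)] at h1
    simp only [Nat.cast_one, one_pow, inv_one] at h1 h2 ⊢
    norm_num
    linarith
  · have hm : max K₀ 1 = K₀ := by omega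
    rw [hm]
    have := sum_tail_aux p K₀ hp hpos t ht
    have hK : (0:ℝ) ≤ ((K₀:ℝ)^p)⁻¹ := by positivity
    linarith

lemma harmonic_lower (K : ℕ) :
    Real.log (K + 1) ≤ ∑ k ∈ Finset.Icc 1 K, (1 : ℝ) / k := by
  have e := tele (fun k => - Real.log (k + 1)) 0 K (Nat.zero_le K)
  have h1 : ∑ k ∈ Finset.Ioc 0 K, (Real.log (k+1) - Real.log ((k - 1 : ℕ) + 1))
      = Real.log (K+1) := by
    have : ∀ x ∈ Finset.Ioc 0 K, (Real.log ((x:ℕ)+1) - Real.log (((x - 1 : ℕ):ℕ)+1)) =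
        ((fun k => - Real.log ((k:ℕ) + 1)) (x-1) - (fun k => - Real.log ((k:ℕ)+1)) x) := by
      intro x _; simp; ring
    rw [Finset.sum_congr rfl this, e]
    simp
  have h2 : ∀ k ∈ Finset.Ioc 0 K,
      Real.log ((k:ℕ)+1) - Real.log (((k - 1 : ℕ):ℕ)+1) ≤ 1 / (k:ℝ) := by
    intro k hk
    have hk1 : 1 ≤ k := (Finset.mem_Ioc.1 hk).1
    have hc : (((k - 1 : ℕ):ℕ):ℝ) + 1 = (k:ℝ) := by
      push_cast [hk1]; ring
    rw [hc]
    have hkpos : (0:ℝ) < (k:ℝ) := by exact_mod_cast hk1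
    rw [← Real.log_div (by positivity) (by positivity)]
    have := Real.log_le_sub_one_of_pos (show (0:ℝ) < ((k:ℝ)+1)/(k:ℝ) by positivity)
    have e2 : ((k:ℝ)+1)/(k:ℝ) - 1 = 1/(k:ℝ) := by field_simp; ring
    linarith [e2 ▸ this]
  calc Real.log (K+1) = ∑ k ∈ Finset.Ioc 0 K, (Real.log ((k:ℕ)+1) - Real.log (((k-1:ℕ):ℕ)+1)) := h1.symm
    _ ≤ ∑ k ∈ Finset.Ioc 0 K, (1:ℝ)/k := Finset.sum_le_sum h2
    _ = ∑ k ∈ Finset.Icc 1 K, (1:ℝ)/k := by rw [← Finset.Icc_add_one_left_eq_Ioc, zero_add]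

lemma harmonic_upper (K : ℕ) (hK : 1 ≤ K) :
    ∑ k ∈ Finset.Icc 1 K, (1 : ℝ) / k ≤ 1 + Real.log K := by
  have e := tele (fun k => - Real.log (k : ℕ)) 1 K hK
  have h2 : ∀ k ∈ Finset.Ioc 1 K, (1:ℝ)/(k:ℝ) ≤
      ((fun k => - Real.log ((k:ℕ):ℝ)) (k-1) - (fun k => - Real.log ((k:ℕ):ℝ)) k) := by
    intro k hk
    have hk2 : 2 ≤ k := (Finset.mem_Ioc.1 hk).1
    have hkR : (2:ℝ) ≤ (k:ℝ) := by exact_mod_cast hk2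
    have hc : (((k - 1 : ℕ):ℕ):ℝ) = (k:ℝ) - 1 := by push_cast [show 1 ≤ k by omega]; ring
    show (1:ℝ)/(k:ℝ) ≤ - Real.log (((k-1:ℕ):ℕ):ℝ) - (- Real.log ((k:ℕ):ℝ))
    rw [hc]
    have hpos : (0:ℝ) < ((k:ℝ)-1)/(k:ℝ) := div_pos (by linarith) (by linarith)
    have hlog : Real.log (((k:ℝ)-1)/(k:ℝ)) = Real.log ((k:ℝ)-1) - Real.log (k:ℝ) :=
      Real.log_div (by linarith) (by linarith)
    have h5 := Real.log_le_sub_one_of_pos hpos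
    have e2 : ((k:ℝ)-1)/(k:ℝ) - 1 = -(1/(k:ℝ)) := by field_simp; ring
    rw [e2, hlog] at h5
    linarith
  have h3 := Finset.sum_le_sum h2
  rw [e] at h3
  have hsplit : Finset.Icc 1 K = Finset.cons 1 (Finset.Ioc 1 K) (by simp) :=
    Finset.Icc_eq_cons_Ioc hK
  rw [hsplit, Finset.sum_cons]
  simp only [Nat.cast_one, Real.log_one] at h3
  norm_num at h3 ⊢
  linarith

lemma ball_sum_le (hd : 1 ≤ d) (I : ℝ) (hI : 1 ≤ I) :
    ∑ i ∈ ballF d I, (multiNorm i ^ d)⁻¹ ≤ d * (1 + Real.log I) := by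
  classical
  have hmap : ∀ i ∈ ballF d I, supc i ∈ Finset.Icc 1 ⌊I⌋₊ := by
    intro i hi
    refine Finset.mem_Icc.2 ⟨one_le_supc hd i, ?_⟩
    apply Nat.le_floor
    exact le_trans (supc_le_mn hd i) (mem_ballF.1 hi)
  rw [← Finset.sum_fiberwise_of_maps_to hmap]
  have hfib : ∀ k ∈ Finset.Icc 1 ⌊I⌋₊,
      ∑ i ∈ (ballF d I).filter (fun i => supc i = k), (multiNorm i ^ d)⁻¹ ≤ (d : ℝ) * (1/k) := by
    intro k hk
    obtain ⟨hk1, hk2⟩ := Finset.mem_Icc.1 hk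
    have hcard : ((ballF d I).filter (fun i => supc i = k)).card ≤ d * k ^ (d-1) := by
      apply card_fiber_le hd ⟨k, hk1⟩
      intro i hi
      exact (Finset.mem_filter.1 hi).2
    have hterm : ∀ i ∈ (ballF d I).filter (fun i => supc i = k),
        (multiNorm i ^ d)⁻¹ ≤ (((k:ℕ):ℝ) ^ d)⁻¹ := by
      intro i hi
      have hsk : ((k:ℕ):ℝ) ≤ multiNorm i := by
        have := supc_le_mn hd i
        rw [(Finset.mem_filter.1 hi).2] at this
        exact this
      have hkpos : (0:ℝ) < ((k:ℕ):ℝ) := by exact_mod_cast hk1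
      apply inv_anti₀ (by positivity)
      exact pow_le_pow_left₀ (by positivity) hsk d
    calc ∑ i ∈ (ballF d I).filter (fun i => supc i = k), (multiNorm i ^ d)⁻¹
        ≤ ∑ _i ∈ (ballF d I).filter (fun i => supc i = k), (((k:ℕ):ℝ) ^ d)⁻¹ :=
          Finset.sum_le_sum hterm
      _ = ((ballF d I).filter (fun i => supc i = k)).card * (((k:ℕ):ℝ) ^ d)⁻¹ := by
          rw [Finset.sum_const, nsmul_eq_mul]
      _ ≤ (d * k ^ (d-1) : ℕ) * (((k:ℕ):ℝ) ^ d)⁻¹ := by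
          apply mul_le_mul_of_nonneg_right _ (by positivity)
          exact_mod_cast hcard
      _ = (d:ℝ) * (1/k) := by
          have hkpos : (0:ℝ) < (k:ℝ) := by exact_mod_cast hk1
          have : (k:ℝ)^d = (k:ℝ)^(d-1) * k := by
            rw [← pow_succ]
            congr 1
            omega
          push_cast
          rw [this]
          field_simp
  calc ∑ k ∈ Finset.Icc 1 ⌊I⌋₊, ∑ i ∈ (ballF d I).filter (fun i => supc i = k),
        (multiNorm i ^ d)⁻¹ ≤ ∑ k ∈ Finset.Icc 1 ⌊I⌋₊, (d:ℝ) * (1/k) :=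
        Finset.sum_le_sum hfib
    _ = (d:ℝ) * ∑ k ∈ Finset.Icc 1 ⌊I⌋₊, (1:ℝ)/k := by rw [Finset.mul_sum]
    _ ≤ (d:ℝ) * (1 + Real.log ⌊I⌋₊) := by
        apply mul_le_mul_of_nonneg_left _ (by positivity)
        exact harmonic_upper ⌊I⌋₊ ((Nat.one_le_floor_iff _).2 hI)
    _ ≤ (d:ℝ) * (1 + Real.log I) := by
        apply mul_le_mul_of_nonneg_left _ (by positivity)
        have : Real.log ⌊I⌋₊ ≤ Real.log I := by
          apply Real.log_le_log (by exact_mod_cast (Nat.one_le_floor_iff _).2 hI : (0:ℝ) < _)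
          exact Nat.floor_le (by linarith)
        linarith

lemma ball_sum_lower (hd : 1 ≤ d) (I : ℝ) (hI : Real.sqrt d ≤ I) :
    ((Real.sqrt d) ^ d)⁻¹ * Real.log (I / Real.sqrt d) ≤
      ∑ i ∈ ballF d I, (multiNorm i ^ d)⁻¹ := by
  classical
  have hdpos : (0:ℝ) < Real.sqrt d := by
    have : (1:ℝ) ≤ (d:ℝ) := by exact_mod_cast hd
    rw [show (0:ℝ) = Real.sqrt 0 by simp]
    exact Real.sqrt_lt_sqrt le_rfl (by linarith)
  set K := ⌊I / Real.sqrt d⌋₊ with hK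
  set ℓ₀ : Fin d := ⟨0, hd⟩ with hℓ₀
  set F : ℕ → Finset (Fin d → ℕ+) := fun k =>
    if hk : 1 ≤ k then
      Fintype.piFinset (fun ℓ => if ℓ = ℓ₀ then {(Nat.toPNat k hk)} else Finset.Icc 1 (Nat.toPNat k hk))
    else ∅ with hF
  -- each F k is inside the ball and has first coordinate k
  have hco : ∀ k, 1 ≤ k → ∀ i ∈ F k, (∀ ℓ, (i ℓ : ℕ) ≤ k) ∧ (i ℓ₀ : ℕ) = k := by
    intro k hk i hi
    rw [hF] at hi
    simp only [dif_pos hk] at hi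
    have hmem := Fintype.mem_piFinset.1 hi
    constructor
    · intro ℓ
      have := hmem ℓ
      by_cases h : ℓ = ℓ₀
      · rw [if_pos h] at this
        rw [Finset.mem_singleton] at this
        rw [this]
        rfl
      · rw [if_neg h, Finset.mem_Icc] at this
        exact_mod_cast this.2
    · have := hmem ℓ₀
      rw [if_pos rfl, Finset.mem_singleton] at this
      rw [this]
      rfl
  have hsub : ∀ k ∈ Finset.Icc 1 K, F k ⊆ ballF d I := by
    intro k hk i hi
    obtain ⟨hk1, hk2⟩ := Finset.mem_Icc.1 hk
    rw [mem_ballF]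
    have h1 := mn_le_of_coord_le i k ((hco k hk1 i hi).1)
    have h2 : Real.sqrt d * k ≤ I := by
      have hkK : (k:ℝ) ≤ (K:ℝ) := by exact_mod_cast hk2
      have hKle : (K:ℝ) ≤ I / Real.sqrt d :=
        Nat.floor_le (div_nonneg (le_trans (le_of_lt hdpos) hI) (le_of_lt hdpos))
      calc Real.sqrt d * k ≤ Real.sqrt d * (I / Real.sqrt d) := by
            apply mul_le_mul_of_nonneg_left _ (le_of_lt hdpos)
            linarith
        _ = I := by field_simp
    linarith
  have hdisj : ∀ k1 ∈ Finset.Icc 1 K, ∀ k2 ∈ Finset.Icc 1 K, k1 ≠ k2 →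
      Disjoint (F k1) (F k2) := by
    intro k1 hk1 k2 hk2 hne
    apply Finset.disjoint_left.2
    intro i hi1 hi2
    have h1 := (hco k1 (Finset.mem_Icc.1 hk1).1 i hi1).2
    have h2 := (hco k2 (Finset.mem_Icc.1 hk2).1 i hi2).2
    exact hne (h1 ▸ h2 ▸ rfl)
  have hcard : ∀ k, 1 ≤ k → (F k).card = k ^ (d - 1) := by
    intro k hk
    rw [hF]
    simp only [dif_pos hk]
    rw [Fintype.card_piFinset]
    calc ∏ ℓ : Fin d, (if ℓ = ℓ₀ then ({(Nat.toPNat k hk)} : Finset ℕ+) else Finset.Icc 1 (Nat.toPNat k hk)).card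
        = ∏ ℓ ∈ Finset.univ.erase ℓ₀,
            (if ℓ = ℓ₀ then ({(Nat.toPNat k hk)} : Finset ℕ+) else Finset.Icc 1 (Nat.toPNat k hk)).card := by
          rw [← Finset.mul_prod_erase Finset.univ _ (Finset.mem_univ ℓ₀)]
          simp
      _ = ∏ _ℓ ∈ Finset.univ.erase ℓ₀, k := by
          apply Finset.prod_congr rfl
          intro ℓ hℓ
          rw [if_neg (Finset.ne_of_mem_erase hℓ), PNat.card_Icc]
          simp [Nat.toPNat]
      _ = k ^ (d - 1) := by
          rw [Finset.prod_const, Finset.card_erase_of_mem (Finset.mem_univ _)]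
          simp
  have hblock : ∀ k ∈ Finset.Icc 1 K,
      ((Real.sqrt d) ^ d)⁻¹ * (1/k) ≤ ∑ i ∈ F k, (multiNorm i ^ d)⁻¹ := by
    intro k hk
    obtain ⟨hk1, _⟩ := Finset.mem_Icc.1 hk
    have hkpos : (0:ℝ) < (k:ℝ) := by exact_mod_cast hk1
    have hterm : ∀ i ∈ F k, ((Real.sqrt d * k) ^ d)⁻¹ ≤ (multiNorm i ^ d)⁻¹ := by
      intro i hi
      apply inv_anti₀
      · exact pow_pos (mn_pos hd i) d
      · exact pow_le_pow_left₀ (mn_nonneg i) (mn_le_of_coord_le i k ((hco k hk1 i hi).1)) d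
    calc ((Real.sqrt d) ^ d)⁻¹ * (1/k)
        = (k:ℝ)^(d-1) * ((Real.sqrt d * k) ^ d)⁻¹ := by
          rw [mul_pow]
          have : (k:ℝ)^d = (k:ℝ)^(d-1) * k := by
            rw [← pow_succ]; congr 1; omega
          rw [this]
          field_simp
      _ = (F k).card * ((Real.sqrt d * k) ^ d)⁻¹ := by
          rw [hcard k hk1]
          push_cast
          ring
      _ = ∑ _i ∈ F k, ((Real.sqrt d * k) ^ d)⁻¹ := by
          rw [Finset.sum_const, nsmul_eq_mul]
      _ ≤ ∑ i ∈ F k, (multiNorm i ^ d)⁻¹ := Finset.sum_le_sum hterm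
  have hunion : ∑ k ∈ Finset.Icc 1 K, ∑ i ∈ F k, (multiNorm i ^ d)⁻¹ ≤
      ∑ i ∈ ballF d I, (multiNorm i ^ d)⁻¹ := by
    rw [← Finset.sum_biUnion hdisj]
    apply Finset.sum_le_sum_of_subset_of_nonneg
    · intro i hi
      obtain ⟨k, hk, hik⟩ := Finset.mem_biUnion.1 hi
      exact hsub k hk hik
    · intro i _ _
      exact inv_nonneg.2 (pow_nonneg (mn_nonneg i) d)
  have hlog : Real.log (I / Real.sqrt d) ≤ ∑ k ∈ Finset.Icc 1 K, (1:ℝ)/k := by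
    have h1 : Real.log (I / Real.sqrt d) ≤ Real.log (K + 1) := by
      apply Real.log_le_log (div_pos (lt_of_lt_of_le hdpos hI) hdpos)
      have := Nat.lt_floor_add_one (I / Real.sqrt d)
      push_cast
      linarith
    exact le_trans h1 (harmonic_lower K)
  calc ((Real.sqrt d) ^ d)⁻¹ * Real.log (I / Real.sqrt d)
      ≤ ((Real.sqrt d) ^ d)⁻¹ * ∑ k ∈ Finset.Icc 1 K, (1:ℝ)/k := by
        apply mul_le_mul_of_nonneg_left hlog (by positivity)
    _ = ∑ k ∈ Finset.Icc 1 K, ((Real.sqrt d) ^ d)⁻¹ * (1/k) := by rw [Finset.mul_sum]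
    _ ≤ ∑ k ∈ Finset.Icc 1 K, ∑ i ∈ F k, (multiNorm i ^ d)⁻¹ :=
        Finset.sum_le_sum hblock
    _ ≤ _ := hunion

noncomputable def tailG (d : ℕ) (I : ℝ) (i : Fin d → ℕ+) : ℝ :=
  if I < multiNorm i then (multiNorm i ^ (2 * d + 2))⁻¹ else 0

lemma tailG_nonneg (I : ℝ) (i : Fin d → ℕ+) : 0 ≤ tailG d I i := by
  rw [tailG]
  split_ifs
  · exact inv_nonneg.2 (pow_nonneg (mn_nonneg i) _)
  · exact le_rfl

lemma tailG_le (I : ℝ) (i : Fin d → ℕ+) : tailG d I i ≤ (multiNorm i ^ (2 * d + 2))⁻¹ := by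
  rw [tailG]
  split_ifs
  · exact le_rfl
  · exact inv_nonneg.2 (pow_nonneg (mn_nonneg i) _)

lemma summable_tailG (hd : 1 ≤ d) (I : ℝ) : Summable (tailG d I) :=
  (summable_mn hd).of_nonneg_of_le (tailG_nonneg I) (tailG_le I)

lemma tail_mono (hd : 1 ≤ d) {I J : ℝ} (h : I ≤ J) :
    ∑' i : Fin d → ℕ+, tailG d J i ≤ ∑' i : Fin d → ℕ+, tailG d I i := by
  apply Summable.tsum_le_tsum _ (summable_tailG hd J) (summable_tailG hd I)
  intro i
  rw [tailG, tailG]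
  split_ifs with h1 h2
  · exact le_rfl
  · exact absurd (lt_of_le_of_lt h h1) h2
  · exact tailG_nonneg I i |>.trans (by rw [tailG, if_pos ‹_›])
  · exact le_rfl

lemma tail_sum_le (hd : 1 ≤ d) (I : ℝ) (hI : 0 < I) :
    ∑' i : Fin d → ℕ+, tailG d I i ≤
      2 * d * (((max ⌊I / Real.sqrt d⌋₊ 1 : ℕ):ℝ) ^ (d + 2))⁻¹ := by
  classical
  apply Summable.tsum_le_of_sum_le (summable_tailG hd I)
  intro s
  set K₀ := ⌊I / Real.sqrt d⌋₊ with hK₀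
  have hdpos : (0:ℝ) < Real.sqrt d := by
    have : (1:ℝ) ≤ (d:ℝ) := by exact_mod_cast hd
    rw [show (0:ℝ) = Real.sqrt 0 by simp]
    exact Real.sqrt_lt_sqrt le_rfl (by linarith)
  set s' := s.filter (fun i => I < multiNorm i) with hs'
  have e1 : ∑ i ∈ s, tailG d I i = ∑ i ∈ s', (multiNorm i ^ (2 * d + 2))⁻¹ := by
    rw [hs', Finset.sum_filter]
    apply Finset.sum_congr rfl
    intro i _
    rw [tailG]
  rw [e1]
  have hmap : ∀ i ∈ s', supc i ∈ s'.image supc := fun i hi => Finset.mem_image_of_mem _ hi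
  rw [← Finset.sum_fiberwise_of_maps_to hmap]
  have himg : ∀ k ∈ s'.image supc, K₀ < k := by
    intro k hk
    obtain ⟨i, hi, hik⟩ := Finset.mem_image.1 hk
    have h1 : I < multiNorm i := (Finset.mem_filter.1 hi).2
    have h2 := mn_le_supc i
    rw [hik] at h2
    have h3 : I / Real.sqrt d < (k:ℝ) := by
      rw [div_lt_iff₀ hdpos]
      calc I < multiNorm i := h1
        _ ≤ Real.sqrt d * k := h2
        _ = (k:ℝ) * Real.sqrt d := by ring
    calc K₀ ≤ ⌊I / Real.sqrt d⌋₊ := le_rfl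
      _ < k := by
        apply Nat.floor_lt (le_of_lt (div_pos hI hdpos)) |>.2 h3
  have hfib : ∀ k ∈ s'.image supc,
      ∑ i ∈ s'.filter (fun i => supc i = k), (multiNorm i ^ (2*d+2))⁻¹ ≤
        (d:ℝ) * (((k:ℝ)) ^ ((d+2)+1))⁻¹ := by
    intro k hk
    have hk1 : 1 ≤ k := by
      obtain ⟨i, hi, hik⟩ := Finset.mem_image.1 hk
      rw [← hik]
      exact one_le_supc hd i
    have hcard : (s'.filter (fun i => supc i = k)).card ≤ d * k ^ (d-1) :=
      card_fiber_le hd ⟨k, hk1⟩ _ (fun i hi => (Finset.mem_filter.1 hi).2)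
    have hterm : ∀ i ∈ s'.filter (fun i => supc i = k),
        (multiNorm i ^ (2*d+2))⁻¹ ≤ (((k:ℝ)) ^ (2*d+2))⁻¹ := by
      intro i hi
      have hsk : ((k:ℕ):ℝ) ≤ multiNorm i := by
        have := supc_le_mn hd i
        rw [(Finset.mem_filter.1 hi).2] at this
        exact this
      apply inv_anti₀ (by positivity)
      exact pow_le_pow_left₀ (by positivity) hsk _
    have hkpos : (0:ℝ) < (k:ℝ) := by exact_mod_cast hk1
    calc ∑ i ∈ s'.filter (fun i => supc i = k), (multiNorm i ^ (2*d+2))⁻¹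
        ≤ ∑ _i ∈ s'.filter (fun i => supc i = k), (((k:ℝ)) ^ (2*d+2))⁻¹ :=
          Finset.sum_le_sum hterm
      _ = (s'.filter (fun i => supc i = k)).card * (((k:ℝ)) ^ (2*d+2))⁻¹ := by
          rw [Finset.sum_const, nsmul_eq_mul]
      _ ≤ ((d * k ^ (d-1) : ℕ):ℝ) * (((k:ℝ)) ^ (2*d+2))⁻¹ := by
          apply mul_le_mul_of_nonneg_right _ (by positivity)
          exact_mod_cast hcard
      _ = (d:ℝ) * (((k:ℝ)) ^ ((d+2)+1))⁻¹ := by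
          push_cast
          have he : (k:ℝ)^(2*d+2) = (k:ℝ)^(d-1) * (k:ℝ)^((d+2)+1) := by
            rw [← pow_add]
            congr 1
            omega
          rw [he]
          field_simp
  calc ∑ k ∈ s'.image supc, ∑ i ∈ s'.filter (fun i => supc i = k), (multiNorm i ^ (2*d+2))⁻¹
      ≤ ∑ k ∈ s'.image supc, (d:ℝ) * (((k:ℝ)) ^ ((d+2)+1))⁻¹ := Finset.sum_le_sum hfib
    _ = (d:ℝ) * ∑ k ∈ s'.image supc, (((k:ℝ)) ^ ((d+2)+1))⁻¹ := by rw [Finset.mul_sum]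
    _ ≤ (d:ℝ) * (2 * (((max K₀ 1 : ℕ):ℝ) ^ (d+2))⁻¹) := by
        apply mul_le_mul_of_nonneg_left _ (by positivity)
        exact sum_inv_pow_tail (d+2) K₀ (by omega) _ himg
    _ = 2 * d * (((max K₀ 1 : ℕ):ℝ) ^ (d + 2))⁻¹ := by ring

lemma tail_sum_ge (hd : 1 ≤ d) (I : ℝ) :
    (max I 1) ^ d * ((4 * Real.sqrt d * max I 1) ^ (2*d+2))⁻¹ ≤
      ∑' i : Fin d → ℕ+, tailG d I i := by
  classical
  have hdpos : (0:ℝ) < Real.sqrt d := by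
    have : (1:ℝ) ≤ (d:ℝ) := by exact_mod_cast hd
    rw [show (0:ℝ) = Real.sqrt 0 by simp]
    exact Real.sqrt_lt_sqrt le_rfl (by linarith)
  have hd1 : (1:ℝ) ≤ Real.sqrt d := by
    rw [show (1:ℝ) = Real.sqrt 1 by simp]
    apply Real.sqrt_le_sqrt
    exact_mod_cast hd
  set a := ⌊I⌋₊ with ha
  set M := max I 1 with hM
  have hMpos : (0:ℝ) < M := lt_of_lt_of_le one_pos (le_max_right _ _)
  set B : Finset (Fin d → ℕ+) :=
    Fintype.piFinset (fun _ : Fin d => Finset.Icc (Nat.toPNat (a+1) (Nat.succ_pos _)) (Nat.toPNat (2*a+2) (by omega)))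
    with hB
  have hcoord : ∀ i ∈ B, ∀ ℓ, a + 1 ≤ (i ℓ : ℕ) ∧ (i ℓ : ℕ) ≤ 2*a+2 := by
    intro i hi ℓ
    have := Fintype.mem_piFinset.1 hi ℓ
    rw [Finset.mem_Icc] at this
    exact ⟨by exact_mod_cast this.1, by exact_mod_cast this.2⟩
  have hInb : ∀ i ∈ B, I < multiNorm i := by
    intro i hi
    have h1 := (hcoord i hi ⟨0, hd⟩).1
    have h2 : I < ((a:ℝ) + 1) := by
      have := Nat.lt_floor_add_one I
      push_cast at this ⊢
      linarith
    calc I < (a:ℝ)+1 := h2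
      _ ≤ ((i ⟨0,hd⟩ : ℕ):ℝ) := by exact_mod_cast h1
      _ ≤ multiNorm i := coord_le_mn i _
  have hmnb : ∀ i ∈ B, multiNorm i ≤ 4 * Real.sqrt d * M := by
    intro i hi
    have h1 := mn_le_of_coord_le i (2*a+2) (fun ℓ => (hcoord i hi ℓ).2)
    have h2 : ((2*a+2 : ℕ):ℝ) ≤ 4 * M := by
      have haI : (a:ℝ) ≤ max I 0 := by
        rcases le_or_gt 0 I with h | h
        · exact le_trans (Nat.floor_le h) (le_max_left _ _)
        · rw [ha, Nat.floor_of_nonpos (le_of_lt h)]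
          simp
      have : max I 0 ≤ M := by
        apply max_le (le_max_left _ _)
        linarith
      push_cast
      have h1M : (1:ℝ) ≤ M := le_max_right _ _
      linarith
    calc multiNorm i ≤ Real.sqrt d * ((2*a+2:ℕ):ℝ) := h1
      _ ≤ Real.sqrt d * (4 * M) := by
          apply mul_le_mul_of_nonneg_left h2 (le_of_lt hdpos)
      _ = 4 * Real.sqrt d * M := by ring
  have hterm : ∀ i ∈ B, ((4 * Real.sqrt d * M) ^ (2*d+2))⁻¹ ≤ tailG d I i := by
    intro i hi
    rw [tailG, if_pos (hInb i hi)]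
    apply inv_anti₀ (pow_pos (mn_pos hd i) _)
    exact pow_le_pow_left₀ (mn_nonneg i) (hmnb i hi) _
  have hcardB : (B.card : ℝ) = ((a:ℝ) + 2) ^ d := by
    have hc1 : (Finset.Icc (Nat.toPNat (a+1) (Nat.succ_pos _)) (Nat.toPNat (2*a+2) (by omega))).card = a + 2 := by
      rw [PNat.card_Icc]
      show 2*a+2+1-(a+1) = a+2
      omega
    rw [hB, Fintype.card_piFinset]
    rw [Finset.prod_congr rfl (fun ℓ _ => hc1), Finset.prod_const]
    push_cast
    simp
  have hsum : ∑ i ∈ B, tailG d I i ≤ ∑' i : Fin d → ℕ+, tailG d I i :=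
    Summable.sum_le_tsum B (fun i _ => tailG_nonneg I i) (summable_tailG hd I)
  have hMa : M ≤ (a:ℝ) + 2 := by
    rw [hM]
    apply max_le
    · have := Nat.lt_floor_add_one I
      push_cast at this ⊢
      linarith
    · have : (0:ℝ) ≤ (a:ℝ) := by positivity
      linarith
  calc M ^ d * ((4 * Real.sqrt d * M) ^ (2*d+2))⁻¹
      ≤ ((a:ℝ)+2) ^ d * ((4 * Real.sqrt d * M) ^ (2*d+2))⁻¹ := by
        apply mul_le_mul_of_nonneg_right _ (by positivity)
        exact pow_le_pow_left₀ (le_of_lt hMpos) hMa d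
    _ = ∑ _i ∈ B, ((4 * Real.sqrt d * M) ^ (2*d+2))⁻¹ := by
        rw [Finset.sum_const, nsmul_eq_mul, hcardB]
    _ ≤ ∑ i ∈ B, tailG d I i := Finset.sum_le_sum hterm
    _ ≤ _ := hsum


/-! helpers -/

lemma sqrtd_pos (hd : 1 ≤ d) : 0 < Real.sqrt d := by
  have : (1:ℝ) ≤ (d:ℝ) := by exact_mod_cast hd
  rw [show (0:ℝ) = Real.sqrt 0 by simp]
  exact Real.sqrt_lt_sqrt le_rfl (by linarith)

lemma one_le_sqrtd (hd : 1 ≤ d) : (1:ℝ) ≤ Real.sqrt d := by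
  rw [show (1:ℝ) = Real.sqrt 1 by simp]
  exact Real.sqrt_le_sqrt (by exact_mod_cast hd)

lemma sqrtd_le_d (hd : 1 ≤ d) : Real.sqrt d ≤ (d:ℝ) := by
  have h1 : (1:ℝ) ≤ (d:ℝ) := by exact_mod_cast hd
  calc Real.sqrt d ≤ Real.sqrt ((d:ℝ)^2) := Real.sqrt_le_sqrt (by nlinarith)
    _ = d := Real.sqrt_sq (by linarith)

/-- the rewrite of `nonuniErr` in terms of `ballF` and `tailG` -/
lemma nonuniErr_eq (hd : 1 ≤ d) (I : ℝ) (n : (Fin d → ℕ+) → ℕ) :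
    nonuniErr d I n =
      (∑ i ∈ ballF d I, (multiNorm i ^ (2*d))⁻¹ / (n i : ℝ)) +
        π⁻¹^2 * ∑' i : Fin d → ℕ+, tailG d I i := by
  rw [nonuniErr, finsum_ball]
  congr 1
  · apply Finset.sum_congr rfl
    intro i _
    congr 1
    rw [show (-(2*(d:ℝ))) = -((2*d : ℕ):ℝ) by push_cast; ring,
      Real.rpow_neg (mn_nonneg i), Real.rpow_natCast]
  · rw [← tsum_mul_left]
    apply tsum_congr
    intro i
    rw [tailG]
    split_ifs with h
    · rw [show (-(2*(d:ℝ))) = -((2*d : ℕ):ℝ) by push_cast; ring,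
        Real.rpow_neg (mn_nonneg i), Real.rpow_natCast]
      have hmn : (0:ℝ) < multiNorm i := mn_pos hd i
      have hπ : (0:ℝ) < π := Real.pi_pos
      field_simp
      ring
    · simp

lemma err_nonneg (hd : 1 ≤ d) (I : ℝ) (n : (Fin d → ℕ+) → ℕ) : 0 ≤ nonuniErr d I n := by
  rw [nonuniErr_eq hd]
  apply add_nonneg
  · apply Finset.sum_nonneg
    intro i _
    apply div_nonneg (inv_nonneg.2 (pow_nonneg (mn_nonneg i) _)) (by positivity)
  · apply mul_nonneg (by positivity)
    exact tsum_nonneg (fun i => tailG_nonneg I i)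

lemma log_sq_le (N : ℕ) (hN : 2 ≤ N) : (Real.log N)^2 ≤ 4 * N := by
  have hN1 : (1:ℝ) ≤ (N:ℝ) := by exact_mod_cast le_trans (by norm_num) hN
  have hs : (0:ℝ) < Real.sqrt N := Real.sqrt_pos.2 (by linarith)
  have h1 : Real.log N = 2 * Real.log (Real.sqrt N) := by
    rw [Real.log_sqrt (by linarith)]; ring
  have h2 : Real.log (Real.sqrt N) ≤ Real.sqrt N - 1 := Real.log_le_sub_one_of_pos hs
  have h3 : (0:ℝ) ≤ Real.log N := Real.log_nonneg hN1
  have h4 : Real.sqrt N * Real.sqrt N = N := Real.mul_self_sqrt (by linarith)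
  nlinarith [Real.sqrt_nonneg (N:ℝ)]

lemma log_lin (t : ℝ) (ht : Real.log 2 ≤ t) : t/50 ≤ t - 2*Real.log t := by
  have hl2 : (0:ℝ) < Real.log 2 := Real.log_pos (by norm_num)
  have htpos : 0 < t := lt_of_lt_of_le hl2 ht
  have hglobal : 2 - 2*Real.log 2 ≤ t - 2*Real.log t := by
    have h1 : Real.log (t/2) ≤ t/2 - 1 := Real.log_le_sub_one_of_pos (by linarith)
    have h2 : Real.log (t/2) = Real.log t - Real.log 2 := Real.log_div (ne_of_gt htpos) (by norm_num)
    linarith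
  rcases le_or_gt t 25 with h25 | h25
  · have : Real.log 2 < 0.6931471808 := Real.log_two_lt_d9
    linarith
  · have hs : (0:ℝ) < Real.sqrt t := Real.sqrt_pos.2 htpos
    have h1 : Real.log t = 2 * Real.log (Real.sqrt t) := by
      rw [Real.log_sqrt (le_of_lt htpos)]; ring
    have h2 : Real.log (Real.sqrt t) ≤ Real.sqrt t - 1 := Real.log_le_sub_one_of_pos hs
    have h4 : Real.sqrt t * Real.sqrt t = t := Real.mul_self_sqrt (le_of_lt htpos)
    have h5 : (5:ℝ) ≤ Real.sqrt t := by nlinarith [Real.sqrt_nonneg t]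
    nlinarith

lemma floor_max_half (y : ℝ) (hy : 0 ≤ y) : y/2 ≤ ((max ⌊y⌋₊ 1 : ℕ) : ℝ) := by
  rcases le_or_gt y 2 with h | h
  · have : (1:ℕ) ≤ max ⌊y⌋₊ 1 := le_max_right _ _
    have : (1:ℝ) ≤ ((max ⌊y⌋₊ 1 : ℕ):ℝ) := by exact_mod_cast this
    linarith
  · have h1 : (⌊y⌋₊ : ℝ) ≤ ((max ⌊y⌋₊ 1 : ℕ):ℝ) := by
      exact_mod_cast le_max_left _ _
    have h2 : y - 1 ≤ (⌊y⌋₊:ℝ) := by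
      have := Nat.lt_floor_add_one y
      linarith
    linarith

lemma card_ball_le (hd : 1 ≤ d) (I : ℝ) (hI : 1 ≤ I) : ((ballF d I).card : ℝ) ≤ I ^ d := by
  classical
  have hm : 1 ≤ max ⌊I⌋₊ 1 := le_max_right _ _
  have hsub : ballF d I ⊆ Fintype.piFinset
      (fun _ : Fin d => Finset.Icc (1:ℕ+) (Nat.toPNat (max ⌊I⌋₊ 1) (by omega))) := by
    intro i hi
    refine Fintype.mem_piFinset.2 fun ℓ => ?_
    refine Finset.mem_Icc.2 ⟨(i ℓ).one_le, ?_⟩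
    have h1 : ((i ℓ : ℕ) : ℝ) ≤ I := le_trans (coord_le_mn i ℓ) (mem_ballF.1 hi)
    have h2 : (i ℓ : ℕ) ≤ ⌊I⌋₊ := Nat.le_floor h1
    have h3 : (i ℓ : ℕ) ≤ max ⌊I⌋₊ 1 := le_trans h2 (le_max_left _ _)
    exact_mod_cast h3
  have hcard : (ballF d I).card ≤ (max ⌊I⌋₊ 1) ^ d := by
    calc (ballF d I).card ≤ (Fintype.piFinset
        (fun _ : Fin d => Finset.Icc (1:ℕ+) (Nat.toPNat (max ⌊I⌋₊ 1) (by omega)))).card :=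
          Finset.card_le_card hsub
      _ = (max ⌊I⌋₊ 1) ^ d := by
          rw [Fintype.card_piFinset]
          have : ∀ ℓ : Fin d, (Finset.Icc (1:ℕ+) (Nat.toPNat (max ⌊I⌋₊ 1) (by omega))).card
              = max ⌊I⌋₊ 1 := by
            intro ℓ
            rw [PNat.card_Icc]
            show max ⌊I⌋₊ 1 + 1 - 1 = max ⌊I⌋₊ 1
            omega
          rw [Finset.prod_congr rfl (fun ℓ _ => this ℓ), Finset.prod_const]
          simp
  have hmax : ((max ⌊I⌋₊ 1 : ℕ):ℝ) ≤ I := by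
    rcases max_cases ⌊I⌋₊ 1 with ⟨h, _⟩ | ⟨h, _⟩
    · rw [h]; exact Nat.floor_le (by linarith)
    · rw [h]; exact_mod_cast hI
  calc ((ballF d I).card : ℝ) ≤ ((max ⌊I⌋₊ 1 : ℕ):ℝ)^d := by exact_mod_cast hcard
    _ ≤ I ^ d := pow_le_pow_left₀ (by positivity) hmax d

lemma rpow_neg_d (hd : 1 ≤ d) (i : Fin d → ℕ+) :
    multiNorm i ^ (-(d:ℝ)) = (multiNorm i ^ d)⁻¹ := by
  rw [show (-(d:ℝ)) = -((d:ℕ):ℝ) by push_cast; ring,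
    Real.rpow_neg (mn_nonneg i), Real.rpow_natCast]

lemma A_bound (hd : 1 ≤ d) (N : ℕ) (hN : 2 ≤ N) (b I : ℝ) (hb : 1 ≤ b) (hI : 1 ≤ I)
    (hlogI : Real.log I ≤ Real.log N) :
    ∑ i ∈ ballF d I, (multiNorm i ^ (2*d))⁻¹ /
      ((⌈multiNorm i ^ (-(d:ℝ)) * (N:ℝ) / (b * Real.log N)⌉₊ : ℕ) : ℝ) ≤
    3 * d * b * (Real.log N)^2 / N := by
  set t := Real.log N with hts
  have hl2 : (0:ℝ) < Real.log 2 := Real.log_pos (by norm_num)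
  have ht2 : Real.log 2 ≤ t := by
    rw [hts]
    apply Real.log_le_log (by norm_num)
    exact_mod_cast hN
  have htpos : 0 < t := lt_of_lt_of_le hl2 ht2
  have hNpos : (0:ℝ) < (N:ℝ) := by positivity
  have hstep : ∀ i ∈ ballF d I,
      (multiNorm i ^ (2*d))⁻¹ /
        ((⌈multiNorm i ^ (-(d:ℝ)) * (N:ℝ) / (b * t)⌉₊ : ℕ) : ℝ) ≤
      (b * t / N) * (multiNorm i ^ d)⁻¹ := by
    intro i _
    have hmn : (0:ℝ) < multiNorm i := mn_pos hd i
    set x := multiNorm i ^ (-(d:ℝ)) * (N:ℝ) / (b * t) with hx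
    have hxpos : 0 < x := by
      rw [hx, rpow_neg_d hd]
      positivity
    have hceil : x ≤ ((⌈x⌉₊ : ℕ):ℝ) := Nat.le_ceil x
    have hnum : (0:ℝ) ≤ (multiNorm i ^ (2*d))⁻¹ := inv_nonneg.2 (by positivity)
    calc (multiNorm i ^ (2*d))⁻¹ / ((⌈x⌉₊ : ℕ):ℝ)
        ≤ (multiNorm i ^ (2*d))⁻¹ / x := by
          apply div_le_div_of_nonneg_left hnum hxpos hceil
      _ = (b * t / N) * (multiNorm i ^ d)⁻¹ := by
          rw [hx, rpow_neg_d hd]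
          have h2d : multiNorm i ^ (2*d) = multiNorm i ^ d * multiNorm i ^ d := by
            rw [← pow_add]; congr 1; omega
          rw [h2d]
          field_simp
  have hS : ∑ i ∈ ballF d I, (multiNorm i ^ d)⁻¹ ≤ 3 * d * t := by
    have h1 := ball_sum_le hd I hI
    have h2 : Real.log I ≤ t := hlogI
    have h3 : (1:ℝ) ≤ 2 * t := by nlinarith [Real.log_two_gt_d9]
    have hd1 : (1:ℝ) ≤ (d:ℝ) := by exact_mod_cast hd
    nlinarith [Real.log_nonneg hI]
  calc ∑ i ∈ ballF d I, (multiNorm i ^ (2*d))⁻¹ /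
        ((⌈multiNorm i ^ (-(d:ℝ)) * (N:ℝ) / (b * t)⌉₊ : ℕ) : ℝ)
      ≤ ∑ i ∈ ballF d I, (b * t / N) * (multiNorm i ^ d)⁻¹ := Finset.sum_le_sum hstep
    _ = (b * t / N) * ∑ i ∈ ballF d I, (multiNorm i ^ d)⁻¹ := by rw [Finset.mul_sum]
    _ ≤ (b * t / N) * (3 * d * t) := by
        apply mul_le_mul_of_nonneg_left hS (by positivity)
    _ = 3 * d * b * t^2 / N := by ring

lemma tail_final (hd : 1 ≤ d) (I : ℝ) (hI : 0 < I) :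
    π⁻¹^2 * ∑' i : Fin d → ℕ+, tailG d I i ≤
      2*d*(2*Real.sqrt d)^(d+2) * (I^(d+2))⁻¹ := by
  have hdp := sqrtd_pos hd
  have h1 := tail_sum_le hd I hI
  have h2 : I/(2*Real.sqrt d) ≤ ((max ⌊I / Real.sqrt d⌋₊ 1 : ℕ):ℝ) := by
    have := floor_max_half (I / Real.sqrt d) (le_of_lt (div_pos hI hdp))
    calc I/(2*Real.sqrt d) = (I/Real.sqrt d)/2 := by ring
      _ ≤ _ := this
  have h3 : (((max ⌊I / Real.sqrt d⌋₊ 1 : ℕ):ℝ) ^ (d + 2))⁻¹ ≤ ((I/(2*Real.sqrt d))^(d+2))⁻¹ := by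
    apply inv_anti₀ (by positivity)
    exact pow_le_pow_left₀ (by positivity) h2 _
  have hπ : π⁻¹^2 ≤ 1 := by
    have := Real.pi_gt_three
    rw [inv_pow]
    apply inv_le_one_of_one_le₀
    nlinarith
  have htail_nonneg : 0 ≤ ∑' i : Fin d → ℕ+, tailG d I i := tsum_nonneg (fun i => tailG_nonneg I i)
  calc π⁻¹^2 * ∑' i : Fin d → ℕ+, tailG d I i ≤ ∑' i : Fin d → ℕ+, tailG d I i := by
        nlinarith
    _ ≤ 2 * d * (((max ⌊I / Real.sqrt d⌋₊ 1 : ℕ):ℝ) ^ (d + 2))⁻¹ := h1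
    _ ≤ 2 * d * ((I/(2*Real.sqrt d))^(d+2))⁻¹ := by
        apply mul_le_mul_of_nonneg_left h3 (by positivity)
    _ = 2*d*(2*Real.sqrt d)^(d+2) * (I^(d+2))⁻¹ := by
        rw [div_pow, inv_div]
        ring
noncomputable def cL (d : ℕ) : ℝ :=
  min (π⁻¹^2 * ((4*Real.sqrt d)^(2*d+2))⁻¹ * ((2*Real.sqrt d)^(d+2))⁻¹ *
        min 1 (((Real.sqrt d)^(d+2))⁻¹/4))
      ((((Real.sqrt d)^d)⁻¹/(50*((d:ℝ)+2)))^2)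

lemma cL_pos (hd : 1 ≤ d) : 0 < cL d := by
  have h := sqrtd_pos hd
  have hπ : (0:ℝ) < π := Real.pi_pos
  apply lt_min
  · apply mul_pos
    apply mul_pos
    apply mul_pos
    · positivity
    · positivity
    · positivity
    · apply lt_min one_pos (by positivity)
  · positivity

lemma key_lower (hd : 1 ≤ d) (N : ℕ) (hN : 2 ≤ N) (I : ℝ) (n : (Fin d → ℕ+) → ℕ)
    (hI : 0 < I) (hn : ∀ i, multiNorm i ≤ I → 1 ≤ n i)
    (hbudget : (∑ᶠ i ∈ {i : Fin d → ℕ+ | multiNorm i ≤ I}, n i) ≤ N) :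
    (cL d) * ((N:ℝ)⁻¹ * (Real.log N)^2) ≤ nonuniErr d I n := by
  classical
  have hsd := sqrtd_pos hd
  have hsd1 := one_le_sqrtd hd
  have hd1 : (1:ℝ) ≤ (d:ℝ) := by exact_mod_cast hd
  set t := Real.log N with hts
  have hl2 : (0:ℝ) < Real.log 2 := Real.log_pos (by norm_num)
  have ht2 : Real.log 2 ≤ t := by
    rw [hts]; exact Real.log_le_log (by norm_num) (by exact_mod_cast hN)
  have htpos : 0 < t := lt_of_lt_of_le hl2 ht2
  have hNpos : (0:ℝ) < (N:ℝ) := by positivity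
  have htN := log_sq_le N hN
  set r : ℝ := N / t^2 with hrs
  have hr : 0 < r := by positivity
  set M : ℝ := r ^ (1/((d:ℝ)+2)) with hMs
  have hM : 0 < M := Real.rpow_pos_of_pos hr _
  have hd2ne : ((d:ℝ)+2) ≠ 0 := by positivity
  have hMpow : M ^ (d+2) = r := by
    rw [hMs, ← Real.rpow_natCast (r ^ (1/((d:ℝ)+2))) (d+2), ← Real.rpow_mul (le_of_lt hr)]
    rw [show (1/((d:ℝ)+2)) * ((d+2:ℕ):ℝ) = 1 by push_cast; field_simp]
    exact Real.rpow_one r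
  have hrinv : (M ^ (d+2))⁻¹ = t^2/N := by
    rw [hMpow, hrs]
    field_simp
  set I₀ : ℝ := 2 * Real.sqrt d * max M (Real.sqrt d) with hI₀s
  have hI₀d : 2 * (d:ℝ) ≤ I₀ := by
    have h1 : Real.sqrt d ≤ max M (Real.sqrt d) := le_max_right _ _
    have h2 : Real.sqrt d * Real.sqrt d = (d:ℝ) := Real.mul_self_sqrt (by positivity)
    rw [hI₀s]
    nlinarith
  have hI₀1 : 1 ≤ I₀ := by linarith
  have hI₀pos : 0 < I₀ := by linarith
  rw [nonuniErr_eq hd]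
  have hA0 : 0 ≤ ∑ i ∈ ballF d I, (multiNorm i ^ (2*d))⁻¹ / (n i : ℝ) := by
    apply Finset.sum_nonneg
    intro i _
    apply div_nonneg (inv_nonneg.2 (pow_nonneg (mn_nonneg i) _)) (by positivity)
  have hT0 : 0 ≤ ∑' i : Fin d → ℕ+, tailG d I i := tsum_nonneg (fun i => tailG_nonneg I i)
  rcases le_or_gt I I₀ with hcase | hcase
  · -- tail-dominated case
    have h1 : ∑' i : Fin d → ℕ+, tailG d I₀ i ≤ ∑' i : Fin d → ℕ+, tailG d I i :=
      tail_mono hd hcase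
    have h2 := tail_sum_ge hd I₀
    rw [max_eq_left hI₀1] at h2
    have h3 : I₀ ^ d * ((4 * Real.sqrt d * I₀) ^ (2*d+2))⁻¹
        = ((4*Real.sqrt d)^(2*d+2))⁻¹ * (I₀^(d+2))⁻¹ := by
      have e : (4 * Real.sqrt d * I₀) ^ (2*d+2)
          = (4*Real.sqrt d)^(2*d+2) * (I₀^d * I₀^(d+2)) := by
        rw [mul_pow]
        congr 1
        rw [show 2*d+2 = d+(d+2) by omega, pow_add]
      rw [e]
      have hI₀ne : I₀ ≠ 0 := ne_of_gt hI₀pos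
      have h4ne : (4*Real.sqrt d) ≠ 0 := by positivity
      field_simp
    have h4 : I₀^(d+2) = (2*Real.sqrt d)^(d+2) * (max M (Real.sqrt d))^(d+2) := by
      rw [hI₀s, mul_pow]
    have hκ : min 1 (((Real.sqrt d)^(d+2))⁻¹/4) * (t^2/N) ≤ ((max M (Real.sqrt d))^(d+2))⁻¹ := by
      have ht4 : t^2/N ≤ 4 := by
        rw [div_le_iff₀ hNpos]; linarith
      have ht0 : 0 ≤ t^2/N := by positivity
      rcases max_cases M (Real.sqrt d) with ⟨he, _⟩ | ⟨he, _⟩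
      · rw [he, hrinv]
        apply mul_le_of_le_one_left ht0 (min_le_left _ _)
      · rw [he]
        calc min 1 (((Real.sqrt d)^(d+2))⁻¹/4) * (t^2/N)
            ≤ (((Real.sqrt d)^(d+2))⁻¹/4) * 4 := by
              apply mul_le_mul (min_le_right _ _) ht4 ht0 (by positivity)
          _ = ((Real.sqrt d)^(d+2))⁻¹ := by ring
    have hmain : cL d * ((N:ℝ)⁻¹ * t^2) ≤
        π⁻¹^2 * ∑' i : Fin d → ℕ+, tailG d I i := by
      have hc : cL d ≤ π⁻¹^2 * ((4*Real.sqrt d)^(2*d+2))⁻¹ * ((2*Real.sqrt d)^(d+2))⁻¹ *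
          min 1 (((Real.sqrt d)^(d+2))⁻¹/4) := min_le_left _ _
      have hchain : π⁻¹^2 * ((4*Real.sqrt d)^(2*d+2))⁻¹ * ((2*Real.sqrt d)^(d+2))⁻¹ *
          min 1 (((Real.sqrt d)^(d+2))⁻¹/4) * (t^2/N) ≤
          π⁻¹^2 * ∑' i : Fin d → ℕ+, tailG d I i := by
        have hπ : (0:ℝ) < π⁻¹^2 := by
          have := Real.pi_pos; positivity
        calc π⁻¹^2 * ((4*Real.sqrt d)^(2*d+2))⁻¹ * ((2*Real.sqrt d)^(d+2))⁻¹ *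
            min 1 (((Real.sqrt d)^(d+2))⁻¹/4) * (t^2/N)
            ≤ π⁻¹^2 * ((4*Real.sqrt d)^(2*d+2))⁻¹ * ((2*Real.sqrt d)^(d+2))⁻¹ *
              ((max M (Real.sqrt d))^(d+2))⁻¹ := by
              rw [mul_assoc (π⁻¹^2 * ((4*Real.sqrt d)^(2*d+2))⁻¹ * ((2*Real.sqrt d)^(d+2))⁻¹)]
              apply mul_le_mul_of_nonneg_left hκ (by positivity)
          _ = π⁻¹^2 * (((4*Real.sqrt d)^(2*d+2))⁻¹ * (I₀^(d+2))⁻¹) := by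
              rw [h4, mul_inv]
              ring
          _ = π⁻¹^2 * (I₀ ^ d * ((4 * Real.sqrt d * I₀) ^ (2*d+2))⁻¹) := by rw [h3]
          _ ≤ π⁻¹^2 * ∑' i : Fin d → ℕ+, tailG d I₀ i := by
              apply mul_le_mul_of_nonneg_left h2 (le_of_lt hπ)
          _ ≤ π⁻¹^2 * ∑' i : Fin d → ℕ+, tailG d I i := by
              apply mul_le_mul_of_nonneg_left h1 (le_of_lt hπ)
      calc cL d * ((N:ℝ)⁻¹ * t^2) ≤
          π⁻¹^2 * ((4*Real.sqrt d)^(2*d+2))⁻¹ * ((2*Real.sqrt d)^(d+2))⁻¹ *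
            min 1 (((Real.sqrt d)^(d+2))⁻¹/4) * (t^2/N) := by
            rw [show (N:ℝ)⁻¹ * t^2 = t^2/N by ring]
            apply mul_le_mul_of_nonneg_right hc (by positivity)
        _ ≤ _ := hchain
    linarith
  · -- Cauchy-Schwarz case
    have hsdI : Real.sqrt d ≤ I := by
      have : Real.sqrt d ≤ 2*(d:ℝ) := le_trans (sqrtd_le_d hd) (by linarith)
      linarith
    set S := ∑ i ∈ ballF d I, (multiNorm i ^ d)⁻¹ with hSs
    have hS1 := ball_sum_lower hd I hsdI
    have hlogM : t/(50*((d:ℝ)+2)) ≤ Real.log M := by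
      rw [hMs, Real.log_rpow hr, hrs]
      have h1 : Real.log (N / t^2) = t - 2 * Real.log t := by
        rw [Real.log_div (ne_of_gt hNpos) (by positivity), Real.log_pow]
        push_cast
        ring
      rw [h1]
      have h2 := log_lin t ht2
      calc t/(50*((d:ℝ)+2)) = (t/50) * (1/((d:ℝ)+2)) := by
            field_simp
        _ ≤ (t - 2*Real.log t) * (1/((d:ℝ)+2)) := by
            apply mul_le_mul_of_nonneg_right h2 (by positivity)
        _ = 1/((d:ℝ)+2) * (t - 2*Real.log t) := by ring
    have hlogI : Real.log M ≤ Real.log (I / Real.sqrt d) := by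
      apply Real.log_le_log hM
      have h1 : I₀ / Real.sqrt d = 2 * max M (Real.sqrt d) := by
        rw [hI₀s]
        field_simp
      have h2 : M ≤ 2 * max M (Real.sqrt d) := by
        have := le_max_left M (Real.sqrt d)
        have h0 : 0 ≤ max M (Real.sqrt d) := le_trans (le_of_lt hM) this
        linarith
      calc M ≤ I₀ / Real.sqrt d := by rw [h1]; exact h2
        _ ≤ I / Real.sqrt d := (div_le_div_iff_of_pos_right hsd).2 (le_of_lt hcase)
    have hσ : ((Real.sqrt d)^d)⁻¹ * (t/(50*((d:ℝ)+2))) ≤ S := by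
      calc ((Real.sqrt d)^d)⁻¹ * (t/(50*((d:ℝ)+2)))
          ≤ ((Real.sqrt d)^d)⁻¹ * Real.log (I / Real.sqrt d) := by
            apply mul_le_mul_of_nonneg_left (le_trans hlogM hlogI) (by positivity)
        _ ≤ S := hS1
    have hg : ∀ i ∈ ballF d I, (0:ℝ) < (n i : ℝ) := by
      intro i hi
      exact_mod_cast hn i (mem_ballF.1 hi)
    have hCS := Finset.sq_sum_div_le_sum_sq_div (ballF d I)
      (fun i => (multiNorm i ^ d)⁻¹) hg
    have hsq : ∀ i ∈ ballF d I,
        ((multiNorm i ^ d)⁻¹)^2 / (n i:ℝ) = (multiNorm i ^ (2*d))⁻¹/(n i:ℝ) := by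
      intro i _
      rw [inv_pow, ← pow_mul, mul_comm d 2]
    rw [Finset.sum_congr rfl hsq] at hCS
    have hb1 : ∑ i ∈ ballF d I, (n i : ℝ) ≤ (N:ℝ) := by
      rw [finsum_ball] at hbudget
      have h1 : ((∑ i ∈ ballF d I, n i : ℕ) : ℝ) ≤ (N:ℝ) := by exact_mod_cast hbudget
      rwa [Nat.cast_sum] at h1
    set i₁ : (Fin d → ℕ+) := fun _ => 1 with hi₁s
    have hmni₁ : multiNorm i₁ = Real.sqrt d := by simp [multiNorm, hi₁s]
    have hi₁ : i₁ ∈ ballF d I := mem_ballF.2 (by rw [hmni₁]; exact hsdI)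
    have hpos : (0:ℝ) < ∑ i ∈ ballF d I, (n i:ℝ) := by
      have h1 : (1:ℝ) ≤ (n i₁ : ℝ) := by
        exact_mod_cast hn i₁ (by rw [hmni₁]; exact hsdI)
      have h2 := Finset.single_le_sum (f := fun i => (n i : ℝ))
        (fun i hi => le_of_lt (hg i hi)) hi₁
      linarith
    have hAS : S^2 / N ≤ ∑ i ∈ ballF d I, (multiNorm i ^ (2*d))⁻¹/(n i:ℝ) := by
      calc S^2/N ≤ S^2/(∑ i ∈ ballF d I, (n i:ℝ)) :=
            div_le_div_of_nonneg_left (sq_nonneg S) hpos hb1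
        _ ≤ _ := hCS
    have hσ0 : (0:ℝ) ≤ ((Real.sqrt d)^d)⁻¹ * (t/(50*((d:ℝ)+2))) := by positivity
    have hfinal : cL d * ((N:ℝ)⁻¹ * t^2) ≤ S^2/N := by
      have hc : cL d ≤ ((((Real.sqrt d)^d)⁻¹/(50*((d:ℝ)+2))))^2 := min_le_right _ _
      have hsq2 : (((Real.sqrt d)^d)⁻¹ * (t/(50*((d:ℝ)+2))))^2 ≤ S^2 :=
        pow_le_pow_left₀ hσ0 hσ 2
      calc cL d * ((N:ℝ)⁻¹ * t^2)
          ≤ ((((Real.sqrt d)^d)⁻¹/(50*((d:ℝ)+2))))^2 * ((N:ℝ)⁻¹ * t^2) := by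
            apply mul_le_mul_of_nonneg_right hc (by positivity)
        _ = (((Real.sqrt d)^d)⁻¹ * (t/(50*((d:ℝ)+2))))^2 / N := by ring
        _ ≤ S^2/N := by
            exact (div_le_div_iff_of_pos_right hNpos).2 hsq2
    have hπT : 0 ≤ π⁻¹^2 * ∑' i : Fin d → ℕ+, tailG d I i :=
      mul_nonneg (by positivity) hT0
    linarith
noncomputable def cU (d : ℕ) : ℝ :=
  18*(d:ℝ)^2 + 3*d + 4*d*(2*Real.sqrt d)^(d+2) * ((Real.log 2)⁻¹)^2

lemma cU_pos (hd : 1 ≤ d) : 0 < cU d := by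
  have hd1 : (1:ℝ) ≤ (d:ℝ) := by exact_mod_cast hd
  have := sqrtd_pos hd
  have hl2 : (0:ℝ) < Real.log 2 := Real.log_pos (by norm_num)
  rw [cU]
  positivity

lemma basic_logs (N : ℕ) (hN : 2 ≤ N) :
    0 < Real.log N ∧ Real.log 2 ≤ Real.log N ∧ (0:ℝ) < N ∧
      1 ≤ (Real.log N)^2 * ((Real.log 2)⁻¹)^2 := by
  have hl2 : (0:ℝ) < Real.log 2 := Real.log_pos (by norm_num)
  have ht2 : Real.log 2 ≤ Real.log N := Real.log_le_log (by norm_num) (by exact_mod_cast hN)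
  have htpos : 0 < Real.log N := lt_of_lt_of_le hl2 ht2
  refine ⟨htpos, ht2, by positivity, ?_⟩
  have h1 : (1:ℝ) = (Real.log 2)^2 * ((Real.log 2)⁻¹)^2 := by
    field_simp
  rw [h1]
  apply mul_le_mul_of_nonneg_right _ (by positivity)
  nlinarith

lemma rpow_pow (x : ℝ) (hx : 0 < x) (m : ℕ) (hm : 0 < m) :
    (x ^ (1/((m:ℝ)))) ^ m = x := by
  have hne : ((m:ℝ)) ≠ 0 := by positivity
  rw [← Real.rpow_natCast (x ^ (1/(m:ℝ))) m, ← Real.rpow_mul (le_of_lt hx)]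
  rw [show (1/((m:ℝ))) * ((m:ℕ):ℝ) = 1 by field_simp]
  exact Real.rpow_one x

lemma err_three (hd : 1 ≤ d) (N : ℕ) (hN : 2 ≤ N) :
    nonuniErr d ((N : ℝ) ^ (1 / ((d : ℝ) + 2)))
        (fun i => ⌈multiNorm i ^ (-(d : ℝ)) * (N : ℝ) / Real.log N⌉₊)
      ≤ cU d * ((N : ℝ)⁻¹ * Real.log N ^ 2) := by
  obtain ⟨htpos, ht2, hNpos, hsq⟩ := basic_logs N hN
  have hd1 : (1:ℝ) ≤ (d:ℝ) := by exact_mod_cast hd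
  set I : ℝ := (N : ℝ) ^ (1 / ((d : ℝ) + 2)) with hIs
  have hIpos : 0 < I := Real.rpow_pos_of_pos hNpos _
  have hI1 : 1 ≤ I :=
    Real.one_le_rpow (by exact_mod_cast le_trans (by norm_num) hN) (by positivity)
  have hIpow : I ^ (d+2) = (N:ℝ) := by
    rw [hIs, show (1/((d:ℝ)+2)) = (1/(((d+2:ℕ)):ℝ)) by push_cast; ring]
    exact rpow_pow _ hNpos (d+2) (by omega)
  have hlogI : Real.log I ≤ Real.log N := by
    rw [hIs, Real.log_rpow hNpos]
    have h0 : 0 ≤ Real.log N := le_of_lt htpos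
    have h1 : 1/((d:ℝ)+2) ≤ 1 := by
      rw [div_le_one (by positivity)]
      linarith
    nlinarith
  rw [nonuniErr_eq hd]
  have hA := A_bound hd N hN 1 I le_rfl hI1 hlogI
  simp only [one_mul] at hA
  have hTail := tail_final hd I hIpos
  rw [hIpow] at hTail
  have hcomb : 2*(d:ℝ)*(2*Real.sqrt d)^(d+2) * ((N:ℝ))⁻¹ ≤
      4*d*(2*Real.sqrt d)^(d+2) * ((Real.log 2)⁻¹)^2 * ((N:ℝ)⁻¹ * Real.log N ^ 2) := by
    have hX : (0:ℝ) ≤ 2*(d:ℝ)*(2*Real.sqrt d)^(d+2) := by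
      have := sqrtd_pos hd
      positivity
    calc 2*(d:ℝ)*(2*Real.sqrt d)^(d+2) * ((N:ℝ))⁻¹
        ≤ 2*(d:ℝ)*(2*Real.sqrt d)^(d+2) * ((N:ℝ))⁻¹ *
            ((Real.log N)^2 * ((Real.log 2)⁻¹)^2) :=
          le_mul_of_one_le_right (by positivity) hsq
      _ = (2*(d:ℝ)*(2*Real.sqrt d)^(d+2) * ((Real.log 2)⁻¹)^2) *
            ((N:ℝ)⁻¹ * Real.log N ^ 2) := by ring
      _ ≤ 4*d*(2*Real.sqrt d)^(d+2) * ((Real.log 2)⁻¹)^2 * ((N:ℝ)⁻¹ * Real.log N ^ 2) := by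
          apply mul_le_mul_of_nonneg_right _ (by positivity)
          have h0 : (0:ℝ) ≤ (d:ℝ)*(2*Real.sqrt d)^(d+2)*((Real.log 2)⁻¹)^2 := by
            have := sqrtd_pos hd
            positivity
          nlinarith
  have h3d : 3*(d:ℝ)*1*(Real.log N)^2/N ≤ (18*(d:ℝ)^2 + 3*d) * ((N:ℝ)⁻¹ * Real.log N ^ 2) := by
    rw [show 3*(d:ℝ)*1*(Real.log N)^2/N = 3*(d:ℝ)*((N:ℝ)⁻¹ * Real.log N ^ 2) by ring]
    apply mul_le_mul_of_nonneg_right _ (by positivity)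
    nlinarith [sq_nonneg (d:ℝ)]
  rw [cU]
  calc (∑ i ∈ ballF d I, (multiNorm i ^ (2*d))⁻¹ /
        ((⌈multiNorm i ^ (-(d:ℝ)) * (N:ℝ) / Real.log N⌉₊ : ℕ):ℝ)) +
        π⁻¹^2 * ∑' i : Fin d → ℕ+, tailG d I i
      ≤ 3*(d:ℝ)*1*(Real.log N)^2/N + 2*(d:ℝ)*(2*Real.sqrt d)^(d+2) * ((N:ℝ))⁻¹ := by
        exact add_le_add hA hTail
      _ ≤ (18*(d:ℝ)^2 + 3*d) * ((N:ℝ)⁻¹ * Real.log N ^ 2) +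
          4*d*(2*Real.sqrt d)^(d+2) * ((Real.log 2)⁻¹)^2 * ((N:ℝ)⁻¹ * Real.log N ^ 2) :=
            add_le_add h3d hcomb
      _ = (18*(d:ℝ)^2 + 3*d + 4*d*(2*Real.sqrt d)^(d+2) * ((Real.log 2)⁻¹)^2) *
          ((N:ℝ)⁻¹ * Real.log N ^ 2) := by ring
lemma feas (hd : 1 ≤ d) (N : ℕ) (hN : 2 ≤ N) :
    ∃ (I : ℝ) (n : (Fin d → ℕ+) → ℕ), 0 < I ∧
      (∀ i : Fin d → ℕ+, multiNorm i ≤ I → 1 ≤ n i) ∧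
      (∑ᶠ i ∈ {i : Fin d → ℕ+ | multiNorm i ≤ I}, n i) ≤ N ∧
      nonuniErr d I n ≤ cU d * ((N : ℝ)⁻¹ * Real.log N ^ 2) := by
  obtain ⟨htpos, ht2, hNpos, hsq⟩ := basic_logs N hN
  have hd1 : (1:ℝ) ≤ (d:ℝ) := by exact_mod_cast hd
  have hN2 : (1:ℝ) ≤ (N:ℝ)/2 := by
    have : (2:ℝ) ≤ (N:ℝ) := by exact_mod_cast hN
    linarith
  set I : ℝ := ((N:ℝ)/2) ^ (1 / ((d : ℝ) + 2)) with hIs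
  have hIpos : 0 < I := Real.rpow_pos_of_pos (by linarith) _
  have hI1 : 1 ≤ I := Real.one_le_rpow hN2 (by positivity)
  have hIpow : I ^ (d+2) = (N:ℝ)/2 := by
    rw [hIs, show (1/((d:ℝ)+2)) = (1/(((d+2:ℕ)):ℝ)) by push_cast; ring]
    exact rpow_pow _ (by linarith) (d+2) (by omega)
  have hlogI : Real.log I ≤ Real.log N := by
    rw [hIs, Real.log_rpow (by linarith)]
    have h0 : 0 ≤ Real.log ((N:ℝ)/2) := Real.log_nonneg hN2
    have h1 : Real.log ((N:ℝ)/2) ≤ Real.log N := by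
      apply Real.log_le_log (by linarith)
      linarith
    have h2 : 1/((d:ℝ)+2) ≤ 1 := by
      rw [div_le_one (by positivity)]
      linarith
    nlinarith
  set n : (Fin d → ℕ+) → ℕ :=
    fun i => ⌈multiNorm i ^ (-(d:ℝ)) * (N:ℝ) / (6*(d:ℝ) * Real.log N)⌉₊ with hns
  have hxpos : ∀ i : Fin d → ℕ+, 0 < multiNorm i ^ (-(d:ℝ)) * (N:ℝ) / (6*(d:ℝ) * Real.log N) := by
    intro i
    have := mn_pos hd i
    have h1 : 0 < multiNorm i ^ (-(d:ℝ)) := Real.rpow_pos_of_pos this _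
    positivity
  refine ⟨I, n, hIpos, ?_, ?_, ?_⟩
  · intro i _
    rw [hns]
    exact Nat.one_le_iff_ne_zero.2 (ne_of_gt (Nat.ceil_pos.2 (hxpos i)))
  · -- budget
    rw [finsum_ball]
    have key : ((∑ i ∈ ballF d I, n i : ℕ) : ℝ) ≤ (N:ℝ) := by
      rw [Nat.cast_sum]
      have hstep : ∀ i ∈ ballF d I, ((n i : ℕ):ℝ) ≤
          (multiNorm i ^ d)⁻¹ * ((N:ℝ) / (6*(d:ℝ) * Real.log N)) + 1 := by
        intro i _
        have h1 : ((n i : ℕ):ℝ) < multiNorm i ^ (-(d:ℝ)) * (N:ℝ) / (6*(d:ℝ) * Real.log N) + 1 := by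
          rw [hns]
          exact Nat.ceil_lt_add_one (le_of_lt (hxpos i))
        rw [rpow_neg_d hd] at h1
        have e : (multiNorm i ^ d)⁻¹ * (N:ℝ) / (6*(d:ℝ) * Real.log N)
            = (multiNorm i ^ d)⁻¹ * ((N:ℝ) / (6*(d:ℝ) * Real.log N)) := by ring
        linarith [e ▸ h1]
      have hS : ∑ i ∈ ballF d I, (multiNorm i ^ d)⁻¹ ≤ 3 * d * Real.log N := by
        have h1 := ball_sum_le hd I hI1
        have h3 : (1:ℝ) ≤ 2 * Real.log N := by nlinarith [Real.log_two_gt_d9]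
        nlinarith [Real.log_nonneg hI1]
      have hcard := card_ball_le hd I hI1
      have hIpowd : I ^ d ≤ (N:ℝ)/2 := by
        have h1 : I ^ d ≤ I ^ (d+2) := pow_le_pow_right₀ hI1 (by omega)
        rw [hIpow] at h1
        exact h1
      calc ∑ i ∈ ballF d I, ((n i : ℕ):ℝ)
          ≤ ∑ i ∈ ballF d I, ((multiNorm i ^ d)⁻¹ * ((N:ℝ) / (6*(d:ℝ) * Real.log N)) + 1) :=
            Finset.sum_le_sum hstep
        _ = (∑ i ∈ ballF d I, (multiNorm i ^ d)⁻¹) * ((N:ℝ) / (6*(d:ℝ) * Real.log N))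
              + (ballF d I).card := by
            rw [Finset.sum_add_distrib, ← Finset.sum_mul]
            simp
        _ ≤ (3 * d * Real.log N) * ((N:ℝ) / (6*(d:ℝ) * Real.log N)) + (N:ℝ)/2 := by
            apply add_le_add
            · apply mul_le_mul_of_nonneg_right hS (by positivity)
            · exact le_trans hcard hIpowd
        _ = (N:ℝ)/2 + (N:ℝ)/2 := by
            congr 1
            field_simp
            ring
        _ = (N:ℝ) := by ring
    exact_mod_cast key
  · -- error bound
    rw [nonuniErr_eq hd]
    have hA := A_bound hd N hN (6*(d:ℝ)) I (by linarith) hI1 hlogI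
    have hTail := tail_final hd I hIpos
    rw [hIpow] at hTail
    have hTail2 : π⁻¹^2 * ∑' i : Fin d → ℕ+, tailG d I i ≤
        4*(d:ℝ)*(2*Real.sqrt d)^(d+2) * (N:ℝ)⁻¹ := by
      have e : ((N:ℝ)/2)⁻¹ = 2 * (N:ℝ)⁻¹ := by
        rw [div_eq_mul_inv, mul_inv, inv_inv]
        ring
      rw [e] at hTail
      calc π⁻¹^2 * ∑' i : Fin d → ℕ+, tailG d I i
          ≤ 2*(d:ℝ)*(2*Real.sqrt d)^(d+2) * (2 * (N:ℝ)⁻¹) := hTail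
        _ = 4*(d:ℝ)*(2*Real.sqrt d)^(d+2) * (N:ℝ)⁻¹ := by ring
    have hcomb : 4*(d:ℝ)*(2*Real.sqrt d)^(d+2) * ((N:ℝ))⁻¹ ≤
        4*d*(2*Real.sqrt d)^(d+2) * ((Real.log 2)⁻¹)^2 * ((N:ℝ)⁻¹ * Real.log N ^ 2) := by
      calc 4*(d:ℝ)*(2*Real.sqrt d)^(d+2) * ((N:ℝ))⁻¹
          ≤ 4*(d:ℝ)*(2*Real.sqrt d)^(d+2) * ((N:ℝ))⁻¹ *
              ((Real.log N)^2 * ((Real.log 2)⁻¹)^2) := by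
            apply le_mul_of_one_le_right _ hsq
            have := sqrtd_pos hd
            positivity
        _ = 4*d*(2*Real.sqrt d)^(d+2) * ((Real.log 2)⁻¹)^2 * ((N:ℝ)⁻¹ * Real.log N ^ 2) := by
            ring
    have h18 : 3*(d:ℝ)*(6*(d:ℝ))*(Real.log N)^2/N ≤
        (18*(d:ℝ)^2 + 3*d) * ((N:ℝ)⁻¹ * Real.log N ^ 2) := by
      rw [show 3*(d:ℝ)*(6*(d:ℝ))*(Real.log N)^2/N = 18*(d:ℝ)^2*((N:ℝ)⁻¹ * Real.log N ^ 2) by ring]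
      apply mul_le_mul_of_nonneg_right _ (by positivity)
      linarith
    rw [cU]
    calc (∑ i ∈ ballF d I, (multiNorm i ^ (2*d))⁻¹ / ((n i : ℕ):ℝ)) +
          π⁻¹^2 * ∑' i : Fin d → ℕ+, tailG d I i
        ≤ 3*(d:ℝ)*(6*(d:ℝ))*(Real.log N)^2/N + 4*(d:ℝ)*(2*Real.sqrt d)^(d+2) * (N:ℝ)⁻¹ :=
          add_le_add hA hTail2
      _ ≤ (18*(d:ℝ)^2 + 3*d) * ((N:ℝ)⁻¹ * Real.log N ^ 2) +
            4*d*(2*Real.sqrt d)^(d+2) * ((Real.log 2)⁻¹)^2 * ((N:ℝ)⁻¹ * Real.log N ^ 2) :=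
          add_le_add h18 hcomb
      _ = (18*(d:ℝ)^2 + 3*d + 4*d*(2*Real.sqrt d)^(d+2) * ((Real.log 2)⁻¹)^2) *
            ((N:ℝ)⁻¹ * Real.log N ^ 2) := by ring

open MN in
theorem nonuniform_discretization_optimization_critical
    (d : ℕ) (hd : 1 ≤ d) :
    ∃ c C : ℝ, 0 < c ∧ 0 < C ∧
      ∀ N : ℕ, 2 ≤ N →
        c * ((N : ℝ)⁻¹ * Real.log N ^ 2) ≤
          sInf {x : ℝ | ∃ (I : ℝ) (n : (Fin d → ℕ+) → ℕ), 0 < I ∧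
            (∀ i : Fin d → ℕ+, multiNorm i ≤ I → 1 ≤ n i) ∧
            (∑ᶠ i ∈ {i : Fin d → ℕ+ | multiNorm i ≤ I}, n i) ≤ N ∧
            x = nonuniErr d I n} ∧
        sInf {x : ℝ | ∃ (I : ℝ) (n : (Fin d → ℕ+) → ℕ), 0 < I ∧
            (∀ i : Fin d → ℕ+, multiNorm i ≤ I → 1 ≤ n i) ∧
            (∑ᶠ i ∈ {i : Fin d → ℕ+ | multiNorm i ≤ I}, n i) ≤ N ∧
            x = nonuniErr d I n}
          ≤ C * ((N : ℝ)⁻¹ * Real.log N ^ 2) ∧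
        nonuniErr d ((N : ℝ) ^ (1 / ((d : ℝ) + 2)))
            (fun i => ⌈multiNorm i ^ (-(d : ℝ)) * (N : ℝ) / Real.log N⌉₊)
          ≤ C * ((N : ℝ)⁻¹ * Real.log N ^ 2) := by
  refine ⟨cL d, cU d, cL_pos hd, cU_pos hd, ?_⟩
  intro N hN
  have hne : ∃ x, x ∈ {x : ℝ | ∃ (I : ℝ) (n : (Fin d → ℕ+) → ℕ), 0 < I ∧
      (∀ i : Fin d → ℕ+, multiNorm i ≤ I → 1 ≤ n i) ∧
      (∑ᶠ i ∈ {i : Fin d → ℕ+ | multiNorm i ≤ I}, n i) ≤ N ∧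
      x = nonuniErr d I n} := by
    refine ⟨nonuniErr d (1/2) (fun _ => 1), 1/2, fun _ => 1, by norm_num,
      fun i _ => le_rfl, ?_, rfl⟩
    rw [finsum_ball]
    have hempty : ballF d ((1:ℝ)/2) = ∅ := by
      apply Finset.eq_empty_of_forall_notMem
      intro i hi
      have h1 := mem_ballF.1 hi
      have h2 := one_le_mn hd i
      linarith
    rw [hempty]
    simp
  have hbdd : BddBelow {x : ℝ | ∃ (I : ℝ) (n : (Fin d → ℕ+) → ℕ), 0 < I ∧
      (∀ i : Fin d → ℕ+, multiNorm i ≤ I → 1 ≤ n i) ∧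
      (∑ᶠ i ∈ {i : Fin d → ℕ+ | multiNorm i ≤ I}, n i) ≤ N ∧
      x = nonuniErr d I n} := by
    refine ⟨0, fun x hx => ?_⟩
    obtain ⟨I, n, hI, hn, hb, rfl⟩ := hx
    exact err_nonneg hd I n
  refine ⟨?_, ?_, err_three hd N hN⟩
  · apply le_csInf hne
    rintro x ⟨I, n, hI, hn, hb, rfl⟩
    exact key_lower hd N hN I n hI hn hb
  · obtain ⟨I, n, hI, hn, hb, herr⟩ := feas hd N hN
    exact le_trans (csInf_le hbdd ⟨I, n, hI, hn, hb, rfl⟩) herr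

end MN

open MN in
theorem nonuniform_discretization_optimization_critical
    (d : ℕ) (hd : 1 ≤ d) :
    ∃ c C : ℝ, 0 < c ∧ 0 < C ∧
      ∀ N : ℕ, 2 ≤ N →
        c * ((N : ℝ)⁻¹ * Real.log N ^ 2) ≤
          sInf {x : ℝ | ∃ (I : ℝ) (n : (Fin d → ℕ+) → ℕ), 0 < I ∧
            (∀ i : Fin d → ℕ+, multiNorm i ≤ I → 1 ≤ n i) ∧
            (∑ᶠ i ∈ {i : Fin d → ℕ+ | multiNorm i ≤ I}, n i) ≤ N ∧
            x = nonuniErr d I n} ∧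
        sInf {x : ℝ | ∃ (I : ℝ) (n : (Fin d → ℕ+) → ℕ), 0 < I ∧
            (∀ i : Fin d → ℕ+, multiNorm i ≤ I → 1 ≤ n i) ∧
            (∑ᶠ i ∈ {i : Fin d → ℕ+ | multiNorm i ≤ I}, n i) ≤ N ∧
            x = nonuniErr d I n}
          ≤ C * ((N : ℝ)⁻¹ * Real.log N ^ 2) ∧
        nonuniErr d ((N : ℝ) ^ (1 / ((d : ℝ) + 2)))
            (fun i => ⌈multiNorm i ^ (-(d : ℝ)) * (N : ℝ) / Real.log N⌉₊)
          ≤ C * ((N : ℝ)⁻¹ * Real.log N ^ 2) := by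
  refine ⟨cL d, cU d, cL_pos hd, cU_pos hd, ?_⟩
  intro N hN
  have hne : ∃ x, x ∈ {x : ℝ | ∃ (I : ℝ) (n : (Fin d → ℕ+) → ℕ), 0 < I ∧
      (∀ i : Fin d → ℕ+, multiNorm i ≤ I → 1 ≤ n i) ∧
      (∑ᶠ i ∈ {i : Fin d → ℕ+ | multiNorm i ≤ I}, n i) ≤ N ∧
      x = nonuniErr d I n} := by
    refine ⟨nonuniErr d (1/2) (fun _ => 1), 1/2, fun _ => 1, by norm_num,
      fun i _ => le_rfl, ?_, rfl⟩
    rw [finsum_ball]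
    have hempty : ballF d ((1:ℝ)/2) = ∅ := by
      apply Finset.eq_empty_of_forall_notMem
      intro i hi
      have h1 := mem_ballF.1 hi
      have h2 := one_le_mn hd i
      linarith
    rw [hempty]
    simp
  have hbdd : BddBelow {x : ℝ | ∃ (I : ℝ) (n : (Fin d → ℕ+) → ℕ), 0 < I ∧
      (∀ i : Fin d → ℕ+, multiNorm i ≤ I → 1 ≤ n i) ∧
      (∑ᶠ i ∈ {i : Fin d → ℕ+ | multiNorm i ≤ I}, n i) ≤ N ∧
      x = nonuniErr d I n} := by
    refine ⟨0, fun x hx => ?_⟩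
    obtain ⟨I, n, hI, hn, hb, rfl⟩ := hx
    exact err_nonneg hd I n
  refine ⟨?_, ?_, err_three hd N hN⟩
  · apply le_csInf hne
    rintro x ⟨I, n, hI, hn, hb, rfl⟩
    exact key_lower hd N hN I n hI hn hb
  · obtain ⟨I, n, hI, hn, hb, herr⟩ := feas hd N hN
    exact le_trans (csInf_le hbdd ⟨I, n, hI, hn, hb, rfl⟩) herr
end
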